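/- arXiv:2205.07743 — 5 statements merged into one kernel-verified Lean document; each statement's English description precedes it below -/
import Mathlib

section
/- For every Moore push-down automaton there exists an equivalent pop-normalized Moore push-down automaton, i.e., one accepting the same language. -/
/-! ### Moore push-down automata -/

/-- A Moore push-down automaton (MPDA).  `trans` contains tuples
`(q, γ, γ', q')` where `γ` is the (optional) popped symbol and `γ'` the
(optional) pushed symbol; a transition never pops and pushes simultaneously. -/
structure MPDA (Q S Γ : Type) where
  trans : Set (Q × Option Γ × Option Γ × Q)
  trans_valid : ∀ t ∈ trans, t.2.1 = none ∨ t.2.2.1 = none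
  out : Q → S
  init : Set Q
  final : Set Q

namespace MPDA

variable {Q S Γ : Type} (M : MPDA Q S Γ)

/-- One move between configurations `⟨q, γα⟩ ⊢ ⟨q', γ'α⟩` (the replaced
stack prefix `γ` together with the rest `α` must be nonempty). -/
def Move (c c' : Q × List Γ) : Prop :=
  ∃ q γ γ' q', ∃ α : List Γ, (q, γ, γ', q') ∈ M.trans ∧
    c = (q, γ.toList ++ α) ∧ c' = (q', γ'.toList ++ α) ∧ γ.toList ++ α ≠ []

/-- An accepting run: a nonempty sequence of configurations, successively
related by moves, starting in an initial state with a single stack symbol and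
ending in a final state with empty stack. -/
def AcceptingRun (cs : List (Q × List Γ)) : Prop :=
  cs.Chain' M.Move ∧
  (∃ q0 ∈ M.init, ∃ g : Γ, cs.head? = some (q0, [g])) ∧
  (∃ qf ∈ M.final, cs.getLast? = some (qf, ([] : List Γ)))

/-- The language accepted by the MPDA: the outputs, symbol by symbol, of the
states attained during accepting runs. -/
def language : Language S :=
  { w | ∃ cs, M.AcceptingRun cs ∧ w = cs.map fun c => M.out c.1 }

/-- Pop-normalization: the state entered when popping a stack symbol is
uniquely determined by that symbol. -/
def PopNormalized : Prop :=
  ∃ ret : Γ → Q, ∀ q γ q', (q, some γ, none, q') ∈ M.trans → q' = ret γ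

end MPDA

/-! ### The `Next` operation on languages -/

/-- `nextWord [σ1, …, σn] = [(σ2, σ1), (σ3, σ2), …, (◁, σn)]`, where the fresh
symbol `◁` is modelled by `none`. -/
def nextWord {S : Type} : List S → List (Option S × S)
  | [] => []
  | [a] => [(none, a)]
  | a :: b :: r => (some b, a) :: nextWord (b :: r)

/-- The `Next` operation on languages. -/
def nextLang {S : Type} (L : Language S) : Language (Option S × S) :=
  { w | ∃ v ∈ L, w = nextWord v }

/-! ### Auxiliary development for pop-normalization -/

namespace MPDAAux

open MPDA

variable {Q S Γ : Type}

/-- The relabelled automaton: stack symbols carry the state to return to. -/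
def relabel (M : MPDA Q S Γ) : MPDA Q S (Γ × Q) where
  trans := {t | (∃ q g q', t = (q, some (g, q'), none, q') ∧ (q, some g, none, q') ∈ M.trans)
    ∨ (∃ q g r q', t = (q, none, some (g, r), q') ∧ (q, none, some g, q') ∈ M.trans)
    ∨ (∃ q q', t = (q, none, none, q') ∧ (q, none, none, q') ∈ M.trans)}
  trans_valid := by
    rintro t (⟨q,g,q',rfl,_⟩|⟨q,g,r,q',rfl,_⟩|⟨q,q',rfl,_⟩) <;> simp
  out := M.out
  init := M.init
  final := M.final

theorem relabel_popNormalized (M : MPDA Q S Γ) : (relabel M).PopNormalized := by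
  refine ⟨Prod.snd, ?_⟩
  rintro q ⟨g, r⟩ q' (⟨q₁,g₁,q₁',heq,_⟩|⟨q₁,g₁,r₁,q₁',heq,_⟩|⟨q₁,q₁',heq,_⟩) <;>
    simp_all

/-- Case analysis of a move. -/
theorem opt_toList_map {A B : Type} {f : A → B} (o : Option A) :
    (o.map f).toList = o.toList.map f := by cases o <;> rfl

theorem move_cases {M : MPDA Q S Γ} {c c₂ : Q × List Γ} (h : M.Move c c₂) :
    (∃ q g q' α, (q, some g, none, q') ∈ M.trans ∧ c = (q, g :: α) ∧ c₂ = (q', α))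
    ∨ (∃ q g q' α, (q, none, some g, q') ∈ M.trans ∧ c = (q, α) ∧ c₂ = (q', g :: α) ∧ α ≠ [])
    ∨ (∃ q q' α, (q, none, none, q') ∈ M.trans ∧ c = (q, α) ∧ c₂ = (q', α) ∧ α ≠ []) := by
  obtain ⟨q, γ, γ', q', α, hmem, hc, hc₂, hne⟩ := h
  match γ, γ' with
  | some g, some g' => exact absurd (M.trans_valid _ hmem) (by simp)
  | some g, none => exact Or.inl ⟨q, g, q', α, hmem, by simpa using hc, by simpa using hc₂⟩
  | none, some g' =>
      exact Or.inr (Or.inl ⟨q, g', q', α, hmem, by simpa using hc, by simpa using hc₂,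
        by simpa using hne⟩)
  | none, none =>
      exact Or.inr (Or.inr ⟨q, q', α, hmem, by simpa using hc, by simpa using hc₂,
        by simpa using hne⟩)

/-- Moves of the relabelled automaton project to moves of the original. -/
theorem move_proj {M : MPDA Q S Γ} {c c₂ : Q × List (Γ × Q)}
    (h : (relabel M).Move c c₂) :
    M.Move (c.1, c.2.map Prod.fst) (c₂.1, c₂.2.map Prod.fst) := by
  obtain ⟨q, γ, γ', q', α, hmem, hc, hc₂, hne⟩ := h
  refine ⟨q, γ.map Prod.fst, γ'.map Prod.fst, q', α.map Prod.fst, ?_, ?_, ?_, ?_⟩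
  · rcases hmem with ⟨q₁,g,q₁',heq,hm⟩|⟨q₁,g,r,q₁',heq,hm⟩|⟨q₁,q₁',heq,hm⟩ <;>
      (cases heq; simpa using hm)
  · simp [hc, opt_toList_map]
  · simp [hc₂, opt_toList_map]
  · rw [opt_toList_map, ← List.map_append]
    simpa using hne

/-- Annotation of a stack relative to the annotated next stack `s'` and the
next state `q'`. -/
def liftStack (q' : Q) (s : List Γ) (s' : List (Γ × Q)) : List (Γ × Q) :=
  (s.take (s.length - s'.length)).map (fun g => (g, q')) ++ s'.drop (s'.length - s.length)

theorem liftStack_pop (q' : Q) (g : Γ) (α : List Γ) (s' : List (Γ × Q))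
    (h : s'.length = α.length) : liftStack q' (g :: α) s' = (g, q') :: s' := by
  simp [liftStack, h, Nat.sub_self, Nat.succ_sub h.ge]

theorem liftStack_nop (q' : Q) (s : List Γ) (s' : List (Γ × Q))
    (h : s'.length = s.length) : liftStack q' s s' = s' := by
  simp [liftStack, h]

theorem liftStack_push (q' : Q) (s : List Γ) (x : Γ × Q) (rest : List (Γ × Q))
    (h : rest.length = s.length) : liftStack q' s (x :: rest) = rest := by
  simp [liftStack, h, Nat.sub_self, Nat.succ_sub h.ge]

/-- The annotated stack of the head of a run. -/
def stk : (Q × List Γ) → List (Q × List Γ) → List (Γ × Q)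
  | c, [] => c.2.map (fun g => (g, c.1))
  | c, c₂ :: cs => liftStack c₂.1 c.2 (stk c₂ cs)

/-- Annotation of a whole run. -/
def ann : (Q × List Γ) → List (Q × List Γ) → List (Q × List (Γ × Q))
  | c, [] => [(c.1, stk c [])]
  | c, c₂ :: cs => (c.1, stk c (c₂ :: cs)) :: ann c₂ cs

theorem stk_proj {M : MPDA Q S Γ} :
    ∀ (c : Q × List Γ) (cs : List (Q × List Γ)), (c :: cs).Chain' M.Move →
      (stk c cs).map Prod.fst = c.2
  | c, [], _ => by simp [stk, Function.comp_def]
  | c, c₂ :: cs, h => by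
    have hmove : M.Move c c₂ := (List.isChain_cons_cons.mp h).1
    have ih := stk_proj (M := M) c₂ cs (List.isChain_cons_cons.mp h).2
    have hlen : (stk c₂ cs).length = c₂.2.length := by
      rw [← ih, List.length_map]
    rcases move_cases hmove with ⟨q,g,q',α,hm,hc,hc₂⟩|⟨q,g,q',α,hm,hc,hc₂,hα⟩|
      ⟨q,q',α,hm,hc,hc₂,hα⟩
    · subst hc; subst hc₂
      rw [stk, liftStack_pop _ _ _ _ (by simpa using hlen)]
      simp [ih]
    · subst hc; subst hc₂
      simp only at hlen ih ⊢
      obtain ⟨x, rest, hx, hfst, hrest⟩ := List.map_eq_cons_iff.mp ih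
      rw [stk, hx, liftStack_push _ _ _ _ (by rw [← hrest, List.length_map]), hrest]
    · subst hc; subst hc₂
      rw [stk, liftStack_nop _ _ _ hlen, ih]

theorem ann_proj {M : MPDA Q S Γ} :
    ∀ (c : Q × List Γ) (cs : List (Q × List Γ)), (c :: cs).Chain' M.Move →
      (ann c cs).map (fun x => (x.1, x.2.map Prod.fst)) = c :: cs
  | c, [], h => by simp [ann, stk_proj (M := M) c [] h]
  | c, c₂ :: cs, h => by
    rw [ann, List.map_cons, stk_proj (M := M) c (c₂ :: cs) h,
      ann_proj c₂ cs (List.isChain_cons_cons.mp h).2]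

/-- Lifting a single move to the relabelled automaton. -/
theorem move_lift {M : MPDA Q S Γ} {c c₂ : Q × List Γ} (h : M.Move c c₂)
    (s₂' : List (Γ × Q)) (hproj : s₂'.map Prod.fst = c₂.2) :
    (relabel M).Move (c.1, liftStack c₂.1 c.2 s₂') (c₂.1, s₂') := by
  have hlen : s₂'.length = c₂.2.length := by rw [← hproj, List.length_map]
  rcases move_cases h with ⟨q,g,q',α,hm,hc,hc₂⟩|⟨q,g,q',α,hm,hc,hc₂,hα⟩|
    ⟨q,q',α,hm,hc,hc₂,hα⟩
  · subst hc; subst hc₂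
    rw [liftStack_pop _ _ _ _ (by simpa using hlen)]
    exact ⟨q, some (g, q'), none, q', s₂', Or.inl ⟨q, g, q', rfl, hm⟩, rfl, rfl, by simp⟩
  · subst hc; subst hc₂
    obtain ⟨x, rest, hx, hfst, hrest⟩ := List.map_eq_cons_iff.mp hproj
    subst hx
    rw [liftStack_push _ _ _ _ (by rw [← hrest, List.length_map])]
    refine ⟨q, none, some (x.1, x.2), q', rest,
      Or.inr (Or.inl ⟨q, x.1, x.2, q', rfl, by rwa [hfst]⟩), rfl, by simp, ?_⟩
    simp only [Option.toList_none, List.nil_append]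
    intro hn; rw [hn] at hrest; exact hα (by simpa using hrest.symm)
  · subst hc; subst hc₂
    rw [liftStack_nop _ _ _ hlen]
    refine ⟨q, none, none, q', s₂', Or.inr (Or.inr ⟨q, q', rfl, hm⟩), rfl, rfl, ?_⟩
    simp only [Option.toList_none, List.nil_append]
    have hproj' : List.map Prod.fst s₂' = α := hproj
    intro hn; rw [hn] at hproj'; exact hα (by simpa using hproj'.symm)

theorem ann_chain {M : MPDA Q S Γ} :
    ∀ (c : Q × List Γ) (cs : List (Q × List Γ)), (c :: cs).Chain' M.Move →
      (ann c cs).Chain' (relabel M).Move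
  | _, [], _ => List.isChain_singleton _
  | c, c₂ :: cs, h => by
    rw [ann]
    have hmove : M.Move c c₂ := (List.isChain_cons_cons.mp h).1
    have htail := (List.isChain_cons_cons.mp h).2
    have ih := ann_chain c₂ cs htail
    have hhead : M.Move c c₂ := hmove
    have key : (relabel M).Move (c.1, stk c (c₂ :: cs)) (c₂.1, stk c₂ cs) := by
      rw [stk]
      exact move_lift hmove (stk c₂ cs) (stk_proj (M := M) c₂ cs htail)
    cases cs with
    | nil => exact List.isChain_cons_cons.mpr ⟨by simpa [ann] using key, ih⟩
    | cons c₃ cs₃ => exact List.isChain_cons_cons.mpr ⟨by simpa [ann] using key, ih⟩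

theorem relabel_language (M : MPDA Q S Γ) : (relabel M).language = M.language := by
  ext w
  constructor
  · rintro ⟨cs, ⟨hchain, ⟨q0, hq0, g, hhead⟩, ⟨qf, hqf, hlast⟩⟩, hw⟩
    refine ⟨cs.map (fun x => (x.1, x.2.map Prod.fst)), ⟨?_, ?_, ?_⟩, ?_⟩
    · exact (List.isChain_map _).mpr (hchain.imp (fun a b h => move_proj h))
    · exact ⟨q0, hq0, g.1, by rw [List.head?_map, hhead]; rfl⟩
    · exact ⟨qf, hqf, by rw [List.getLast?_map, hlast]; rfl⟩
    · rw [hw, List.map_map]; rfl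
  · rintro ⟨cs, ⟨hchain, ⟨q0, hq0, g, hhead⟩, ⟨qf, hqf, hlast⟩⟩, hw⟩
    cases cs with
    | nil => simp at hhead
    | cons c cs =>
      have hproj := ann_proj (M := M) c cs hchain
      refine ⟨ann c cs, ⟨ann_chain c cs hchain, ?_, ?_⟩, ?_⟩
      · -- head
        have hc : c = (q0, [g]) := by simpa using hhead
        subst hc
        refine ⟨q0, hq0, ?_⟩
        have hs : (stk (q0, [g]) cs).map Prod.fst = [g] :=
          stk_proj (M := M) _ cs hchain
        obtain ⟨x, rest, hx, hfst, hrest⟩ := List.map_eq_cons_iff.mp hs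
        have hrest' : rest = [] := by simpa using hrest
        subst hrest'
        refine ⟨x, ?_⟩
        cases cs with
        | nil => simp only [ann, List.head?_cons, hx]
        | cons c₂ cs₂ => simp only [ann, List.head?_cons, hx]
      · -- last
        refine ⟨qf, hqf, ?_⟩
        have h1 : ((ann c cs).map (fun x => (x.1, x.2.map Prod.fst))).getLast?
            = (c :: cs).getLast? := by rw [hproj]
        rw [List.getLast?_map, hlast] at h1
        obtain ⟨y, hy⟩ : ∃ y, (ann c cs).getLast? = some y := by
          cases hh : (ann c cs).getLast? with
          | none => rw [hh] at h1; simp at h1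
          | some y => exact ⟨y, rfl⟩
        rw [hy] at h1 ⊢
        obtain ⟨hy1, hy2⟩ : y.1 = qf ∧ y.2.map Prod.fst = [] := by
          have := Option.some.inj h1
          exact ⟨congrArg Prod.fst this, congrArg Prod.snd this⟩
        have : y.2 = [] := by simpa using hy2
        rw [show y = (qf, ([] : List (Γ × Q))) from Prod.ext hy1 this]
      · -- word
        rw [hw]
        have : (c :: cs).map (fun x => M.out x.1)
            = ((ann c cs).map (fun x => (x.1, x.2.map Prod.fst))).map
              (fun x => M.out x.1) := by rw [hproj]
        rw [this, List.map_map]; rfl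

end MPDAAux

/-- For every Moore push-down automaton there exists an
equivalent pop-normalized Moore push-down automaton. -/
theorem mpda_pop_normalization (Q S Γ : Type) [Fintype Q] [Fintype S] [Fintype Γ]
    (M : MPDA Q S Γ) :
    ∃ (Q' Γ' : Type) (_ : Fintype Q') (_ : Fintype Γ') (M' : MPDA Q' S Γ'),
      M'.PopNormalized ∧ M'.language = M.language := by
  exact ⟨Q, Γ × Q, inferInstance, inferInstance, MPDAAux.relabel M,
    MPDAAux.relabel_popNormalized M, MPDAAux.relabel_language M⟩
end

section
/- If L is a context-free language over an alphabet Σ and ◁ ∉ Σ, then the language Next(L) over the alphabet (Σ ∪ {◁}) × Σ is context-free as well. -/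
/-! ### Auxiliary development for the proof -/

namespace NextProof

open ContextFreeGrammar

section DerT

variable {T : Type}

/-- Big-step (derivation-tree style) derivability of a terminal word from a
sentential form. -/
inductive DerT (g : ContextFreeGrammar.{0} T) : List (Symbol T g.NT) → List T → Prop
  | nil : DerT g [] []
  | ter {s : List (Symbol T g.NT)} {w : List T} (a : T) :
      DerT g s w → DerT g (Symbol.terminal a :: s) (a :: w)
  | nt {s : List (Symbol T g.NT)} {w₁ w₂ : List T} {r : ContextFreeRule T g.NT}
      (hr : r ∈ g.rules) :
      DerT g r.output w₁ → DerT g s w₂ →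
      DerT g (Symbol.nonterminal r.input :: s) (w₁ ++ w₂)

variable {g : ContextFreeGrammar.{0} T}

lemma DerT.derives {s : List (Symbol T g.NT)} {w : List T} (h : DerT g s w) :
    g.Derives s (w.map Symbol.terminal) := by
  induction h with
  | nil => rfl
  | ter a _ ih =>
      simpa using Derives.append_left ih [Symbol.terminal a]
  | nt hr _ _ ih₁ ih₂ =>
      rename_i s w₁ w₂ r _ _
      have step1 : g.Produces (Symbol.nonterminal r.input :: s) (r.output ++ s) :=
        ⟨r, hr, ContextFreeRule.Rewrites.head s⟩
      have step2 : g.Derives (r.output ++ s) (w₁.map Symbol.terminal ++ s) :=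
        ih₁.append_right s
      have step3 : g.Derives (w₁.map Symbol.terminal ++ s)
          (w₁.map Symbol.terminal ++ w₂.map Symbol.terminal) :=
        ih₂.append_left _
      have := (step1.trans_derives step2).trans step3
      simpa using this

lemma DerT.append {u v : List (Symbol T g.NT)} {w₁ w₂ : List T}
    (h₁ : DerT g u w₁) (h₂ : DerT g v w₂) : DerT g (u ++ v) (w₁ ++ w₂) := by
  induction h₁ with
  | nil => simpa using h₂
  | ter a _ ih => exact DerT.ter a ih
  | nt hr hout hs ihout ihs =>
      rw [List.cons_append, List.append_assoc]
      exact DerT.nt hr hout ihs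

lemma DerT.split {u v : List (Symbol T g.NT)} {w : List T}
    (h : DerT g (u ++ v) w) :
    ∃ w₁ w₂, w = w₁ ++ w₂ ∧ DerT g u w₁ ∧ DerT g v w₂ := by
  induction u generalizing w with
  | nil => exact ⟨[], w, rfl, DerT.nil, h⟩
  | cons sym u ih =>
      cases h with
      | ter a h =>
          obtain ⟨w₁, w₂, rfl, h₁, h₂⟩ := ih h
          exact ⟨a :: w₁, w₂, rfl, DerT.ter a h₁, h₂⟩
      | nt hr hout h =>
          obtain ⟨w₁, w₂, rfl, h₁, h₂⟩ := ih h
          exact ⟨_ ++ w₁, w₂, by rw [List.append_assoc], DerT.nt hr hout h₁, h₂⟩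

lemma derT_terminal (w : List T) : DerT g (w.map Symbol.terminal) w := by
  induction w with
  | nil => exact DerT.nil
  | cons a w ih => exact DerT.ter a ih

lemma DerT.of_output {r : ContextFreeRule T g.NT} (hr : r ∈ g.rules) {w : List T}
    (h : DerT g r.output w) : DerT g [Symbol.nonterminal r.input] w := by
  simpa using DerT.nt hr h DerT.nil

lemma DerT_nil_inv {w : List T} (h : DerT g [] w) : w = [] := by
  cases h; rfl

lemma DerT_cons_nt_inv {A : g.NT} {s : List (Symbol T g.NT)} {w : List T}
    (h : DerT g (Symbol.nonterminal A :: s) w) :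
    ∃ r ∈ g.rules, r.input = A ∧ ∃ w₁ w₂, w = w₁ ++ w₂ ∧ DerT g r.output w₁ ∧ DerT g s w₂ := by
  cases h with
  | nt hr h₁ h₂ => exact ⟨_, hr, rfl, _, _, rfl, h₁, h₂⟩

lemma derT_of_derives {s : List (Symbol T g.NT)} {w : List T}
    (h : g.Derives s (w.map Symbol.terminal)) : DerT g s w := by
  induction h using Relation.ReflTransGen.head_induction_on with
  | refl => exact derT_terminal w
  | head hp _ ih =>
      obtain ⟨r, hr, hrw⟩ := hp
      obtain ⟨p, q, rfl, rfl⟩ := hrw.exists_parts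
      obtain ⟨w₁₂, w₃, rfl, h₁₂, h₃⟩ := DerT.split (u := p ++ r.output) (v := q) ih
      obtain ⟨w₁, w₂, rfl, h₁, h₂⟩ := DerT.split h₁₂
      exact DerT.append (DerT.append h₁ (DerT.of_output hr h₂)) h₃

lemma derT_iff {s : List (Symbol T g.NT)} {w : List T} :
    DerT g s w ↔ g.Derives s (w.map Symbol.terminal) :=
  ⟨DerT.derives, derT_of_derives⟩

end DerT

/-! ### The encoding and the annotated grammar -/

section Encode

variable {S : Type}

/-- `encodeWith x v` pairs every letter of `v` with its successor;
the lookahead of the last letter is `x`. -/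
def encodeWith (x : Option S) : List S → List (Option S × S)
  | [] => []
  | [a] => [(x, a)]
  | a :: b :: r => (some b, a) :: encodeWith x (b :: r)

lemma nextWord_eq (v : List S) : nextWord v = encodeWith none v := by
  induction v with
  | nil => rfl
  | cons a v ih =>
      cases v with
      | nil => rfl
      | cons b r => simpa [nextWord, encodeWith] using ih

lemma encodeWith_cons (x : Option S) (a : S) (v : List S) :
    encodeWith x (a :: v) = (v.head?.or x, a) :: encodeWith x v := by
  cases v with
  | nil => rfl
  | cons b r => rfl

lemma encodeWith_append (x : Option S) (u v : List S) :
    encodeWith x (u ++ v) = encodeWith (v.head?.or x) u ++ encodeWith x v := by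
  induction u with
  | nil => rfl
  | cons a u ih =>
      rw [List.cons_append, encodeWith_cons, encodeWith_cons, ih]
      congr 2
      cases u <;> cases v <;> simp

lemma head?_append_or (u v : List S) (x : Option S) :
    (u ++ v).head?.or x = u.head?.or (v.head?.or x) := by
  cases u <;> simp

end Encode

section Construction

variable {S : Type} [Fintype S]

/-- Nonterminals of the annotated grammar. -/
abbrev NT' (S : Type) (N : Type) : Type := Option (N × Option S × Option S)

variable {N : Type}

/-- First symbol of the yield of a sentential form, as determined by its first
symbol, the guesses `fs`, and a default `x`. -/
def fstOf (x : Option S) : List (Symbol S N) → List (Option S) → Option S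
  | [], _ => x
  | Symbol.terminal a :: _, _ => some a
  | Symbol.nonterminal _ :: _, fs => fs.headI

/-- The annotated version of a sentential form. -/
def ann (x : Option S) : List (Symbol S N) → List (Option S) → List (Symbol (Option S × S) (NT' S N))
  | [], _ => []
  | Symbol.terminal a :: s, fs =>
      Symbol.terminal (fstOf x s fs.tail, a) :: ann x s fs.tail
  | Symbol.nonterminal B :: s, fs =>
      Symbol.nonterminal (some (B, fs.headI, fstOf x s fs.tail)) :: ann x s fs.tail

/-- The annotated version of a rule. -/
def mkRule (r : ContextFreeRule S N) (x : Option S) (fs : List (Option S)) :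
    ContextFreeRule (Option S × S) (NT' S N) :=
  ⟨some (r.input, fstOf x r.output fs, x), ann x r.output fs⟩

variable (g : ContextFreeGrammar.{0} S)

/-- Start rule of the annotated grammar. -/
def startRule (f : Option S) : ContextFreeRule (Option S × S) (NT' S g.NT) :=
  ⟨none, [Symbol.nonterminal (some (g.initial, f, none))]⟩

open scoped Classical in
/-- The annotated grammar. -/
noncomputable def nextGrammar : ContextFreeGrammar.{0} (Option S × S) :=
  ⟨NT' S g.NT, none,
    ((Finset.univ : Finset (Option S)).image (startRule g)) ∪
      g.rules.biUnion (fun r =>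
        (Finset.univ : Finset (Option S × (Fin r.output.length → Option S))).image
          (fun p => mkRule r p.1 (List.ofFn p.2)))⟩

lemma mem_nextGrammar_rules {R : ContextFreeRule (Option S × S) (NT' S g.NT)} :
    R ∈ (nextGrammar g).rules ↔
      (∃ f, R = startRule g f) ∨
      (∃ r ∈ g.rules, ∃ x fs, fs.length = r.output.length ∧ R = mkRule r x fs) := by
  classical
  have hrules : ((nextGrammar g).rules : Finset (ContextFreeRule (Option S × S) (NT' S g.NT))) =
      (((Finset.univ : Finset (Option S)).image (startRule g)) ∪
        g.rules.biUnion (fun r =>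
          (Finset.univ : Finset (Option S × (Fin r.output.length → Option S))).image
            (fun p => mkRule r p.1 (List.ofFn p.2))) :
          Finset (ContextFreeRule (Option S × S) (NT' S g.NT))) := rfl
  suffices key : R ∈ (((Finset.univ : Finset (Option S)).image (startRule g)) ∪
        g.rules.biUnion (fun r =>
          (Finset.univ : Finset (Option S × (Fin r.output.length → Option S))).image
            (fun p => mkRule r p.1 (List.ofFn p.2))) :
          Finset (ContextFreeRule (Option S × S) (NT' S g.NT))) ↔
      (∃ f, R = startRule g f) ∨
      (∃ r ∈ g.rules, ∃ x fs, fs.length = r.output.length ∧ R = mkRule r x fs) by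
    rw [← hrules] at key; exact key
  simp only [Finset.mem_union, Finset.mem_image, Finset.mem_biUnion,
    Finset.mem_univ, true_and]
  constructor
  · rintro (⟨f, hf⟩ | ⟨r, hr, ⟨x, fv⟩, hR⟩)
    · exact Or.inl ⟨f, hf.symm⟩
    · exact Or.inr ⟨r, hr, x, List.ofFn fv, by simp, hR.symm⟩
  · rintro (⟨f, hf⟩ | ⟨r, hr, x, fs, hlen, hR⟩)
    · exact Or.inl ⟨f, hf.symm⟩
    · refine Or.inr ⟨r, hr, ⟨x, fun i => fs.get (Fin.cast hlen.symm i)⟩, ?_⟩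
      rw [hR]
      congr 1
      refine (List.ext_get (by simp [hlen]) ?_).symm
      intro i h1 h2
      simp

lemma startRule_mem (f : Option S) : startRule g f ∈ (nextGrammar g).rules :=
  (mem_nextGrammar_rules g).2 (Or.inl ⟨f, rfl⟩)

lemma mkRule_mem {r : ContextFreeRule S g.NT} (hr : r ∈ g.rules) (x : Option S)
    {fs : List (Option S)} (hlen : fs.length = r.output.length) :
    mkRule r x fs ∈ (nextGrammar g).rules :=
  (mem_nextGrammar_rules g).2 (Or.inr ⟨r, hr, x, fs, hlen, rfl⟩)

/-- Soundness of the simulation. -/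
lemma sound {s : List (Symbol S g.NT)} {v : List S} (h : DerT g s v) (x : Option S) :
    ∃ fs : List (Option S), fs.length = s.length ∧ fstOf x s fs = v.head?.or x ∧
      DerT (nextGrammar g) (ann x s fs) (encodeWith x v) := by
  induction h generalizing x with
  | nil => exact ⟨[], rfl, rfl, DerT.nil⟩
  | ter a _ ih =>
      obtain ⟨fs, hlen, hfst, hder⟩ := ih x
      refine ⟨none :: fs, by simp [hlen], rfl, ?_⟩
      rw [encodeWith_cons]
      show DerT (nextGrammar g)
        (Symbol.terminal (fstOf x _ (none :: fs).tail, a) :: ann x _ (none :: fs).tail) _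
      simp only [List.tail_cons]
      rw [hfst]
      exact DerT.ter _ hder
  | nt hr _ _ ih₁ ih₂ =>
      rename_i s w₁ w₂ r _ _
      obtain ⟨fs₂, hlen₂, hfst₂, hder₂⟩ := ih₂ x
      obtain ⟨fs₁, hlen₁, hfst₁, hder₁⟩ := ih₁ (fstOf x s fs₂)
      refine ⟨fstOf (fstOf x s fs₂) r.output fs₁ :: fs₂, by simp [hlen₂], ?_, ?_⟩
      · show fstOf (fstOf x s fs₂) r.output fs₁ = _
        rw [hfst₁, hfst₂, head?_append_or]
      · show DerT (nextGrammar g)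
          (Symbol.nonterminal (some (r.input, fstOf (fstOf x s fs₂) r.output fs₁,
            fstOf x s fs₂)) :: ann x s fs₂)
          (encodeWith x (w₁ ++ w₂))
        rw [encodeWith_append, ← hfst₂]
        exact DerT.nt (g := nextGrammar g) (mkRule_mem g hr (fstOf x s fs₂) hlen₁) hder₁ hder₂

/-- Completeness of the simulation. -/
lemma complete {s' : List (Symbol (Option S × S) (nextGrammar g).NT)} {w : List (Option S × S)}
    (h : DerT (nextGrammar g) s' w) :
    ∀ (x : Option S) (s : List (Symbol S g.NT)) (fs : List (Option S)),
      s' = ann x s fs →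
      ∃ v, DerT g s v ∧ w = encodeWith x v ∧ fstOf x s fs = v.head?.or x := by
  induction h with
  | nil =>
      intro x s fs hs
      cases s with
      | nil => exact ⟨[], DerT.nil, rfl, rfl⟩
      | cons sym s => cases sym <;> simp [ann] at hs
  | ter a _ ih =>
      intro x s fs hs
      cases s with
      | nil => simp [ann] at hs
      | cons sym s =>
          cases sym with
          | nonterminal B => rw [ann] at hs; cases (List.cons.inj hs).1
          | terminal b =>
              rw [ann] at hs
              injection hs with ha hrest
              obtain ⟨v, hv, rfl, hfst⟩ := ih x s fs.tail hrest
              injection ha with ha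
              refine ⟨b :: v, DerT.ter b hv, ?_, rfl⟩
              rw [encodeWith_cons, ← hfst, ← ha]
  | nt hR _ _ ih₁ ih₂ =>
      rename_i s₂' w₁ w₂ R _ _
      intro x s fs hs
      cases s with
      | nil => simp [ann] at hs
      | cons sym s =>
          cases sym with
          | terminal b => rw [ann] at hs; cases (List.cons.inj hs).1
          | nonterminal B =>
              rw [ann] at hs
              injection hs with hhead hrest
              injection hhead with hRin
              rcases (mem_nextGrammar_rules g).1 hR with ⟨f, rfl⟩ | ⟨r, hr, y, fs₁, hlen, rfl⟩
              · simp [startRule] at hRin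
              · have hRin' : (mkRule r y fs₁).input = some (r.input, fstOf y r.output fs₁, y) := rfl
                rw [hRin'] at hRin
                injection hRin with hRin
                obtain ⟨hB, hf, hy⟩ : B = r.input ∧ fs.headI = fstOf y r.output fs₁ ∧
                    fstOf x s fs.tail = y := by
                  have h1 := congrArg Prod.fst hRin
                  have h2 := congrArg (Prod.fst ∘ Prod.snd) hRin
                  have h3 := congrArg (Prod.snd ∘ Prod.snd) hRin
                  exact ⟨h1.symm, h2.symm, h3.symm⟩
                obtain ⟨v₁, hv₁, rfl, hfst₁⟩ := ih₁ y r.output fs₁ rfl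
                obtain ⟨v₂, hv₂, rfl, hfst₂⟩ := ih₂ x s fs.tail hrest
                refine ⟨v₁ ++ v₂, ?_, ?_, ?_⟩
                · subst hB; exact DerT.nt hr hv₁ hv₂
                · rw [encodeWith_append, ← hy, hfst₂]
                · show fs.headI = _
                  rw [hf, hfst₁, head?_append_or, ← hy, hfst₂]

lemma nextGrammar_language : (nextGrammar g).language = nextLang g.language := by
  ext w
  constructor
  · intro hw
    rw [mem_language_iff] at hw
    have hD : DerT (nextGrammar g) [Symbol.nonterminal (nextGrammar g).initial] w :=
      derT_of_derives hw
    obtain ⟨R, hR, hin, w₁, w₂, rfl, h₁, h₂⟩ := DerT_cons_nt_inv hD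
    cases DerT_nil_inv h₂
    rcases (mem_nextGrammar_rules g).1 hR with ⟨f, rfl⟩ | ⟨r, hr, y, fs₁, hlen, rfl⟩
    · have hout : (startRule g f).output = ann none [Symbol.nonterminal g.initial] [f] := by
        simp [startRule, ann, fstOf]
      obtain ⟨v, hv, hw₁, -⟩ := complete g h₁ none [Symbol.nonterminal g.initial] [f] hout.symm
      have hder : g.Derives [Symbol.nonterminal g.initial] (v.map Symbol.terminal) := by
        have := hv.derives
        simpa using this
      exact ⟨v, hder, by rw [nextWord_eq, List.append_nil, hw₁]⟩
    · exact absurd hin (by simp [mkRule, nextGrammar])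
  · rintro ⟨v, hv, rfl⟩
    rw [mem_language_iff] at hv ⊢
    have hD : DerT g [Symbol.nonterminal g.initial] v := derT_of_derives hv
    obtain ⟨fs, hlen, hfst, hder⟩ := sound g hD none
    have hann : ann none [Symbol.nonterminal g.initial] fs =
        [Symbol.nonterminal (some (g.initial, fs.headI, none))] := by
      simp [ann, fstOf]
    rw [hann] at hder
    have hfull : DerT (nextGrammar g) [Symbol.nonterminal (nextGrammar g).initial]
        (encodeWith none v) := by
      have hmem := startRule_mem g fs.headI
      have := DerT.nt (g := nextGrammar g) hmem (by exact hder) DerT.nil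
      simpa [startRule, show (nextGrammar g).initial = none from rfl] using this
    rw [nextWord_eq]
    simpa using hfull.derives

end Construction

end NextProof

/-- If `L` is a context-free language over the alphabet `S`
(and `◁ ∉ S`, here the fresh symbol `◁` is modelled by `none : Option S`),
then `Next(L)` is context-free as well. -/
theorem nextLang_isContextFree (S : Type) [Fintype S] (L : Language S)
    (h : L.IsContextFree) : (nextLang L).IsContextFree := by
  obtain ⟨g, rfl⟩ := h
  exact ⟨NextProof.nextGrammar g, NextProof.nextGrammar_language g⟩
end

section
/- For every context-free language L over an alphabet Σ all of whose strings have length at least 2, there exists a pop-normalized Moore push-down automaton A such that L(A) = Next(L). -/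
namespace ContextFreeGrammar

variable {T : Type} {g : ContextFreeGrammar.{0} T}

/-- `n`-step derivation. -/
inductive DerivesIn (g : ContextFreeGrammar.{0} T) :
    List (Symbol T g.NT) → List (Symbol T g.NT) → ℕ → Prop
  | refl (u : List (Symbol T g.NT)) : DerivesIn g u u 0
  | head {u v w n} : g.Produces u v → DerivesIn g v w n → DerivesIn g u w (n + 1)

lemma DerivesIn.derives {u v : List (Symbol T g.NT)} {n : ℕ} (h : g.DerivesIn u v n) :
    g.Derives u v := by
  induction h with
  | refl => rfl
  | head hp _ ih => exact hp.trans_derives ih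

lemma Derives.derivesIn {u v : List (Symbol T g.NT)} (h : g.Derives u v) :
    ∃ n, g.DerivesIn u v n := by
  induction h using Relation.ReflTransGen.head_induction_on with
  | refl => exact ⟨0, .refl _⟩
  | head hp _ ih => exact ⟨ih.choose + 1, .head hp ih.choose_spec⟩

lemma no_nonterminal_stuck {u v : List (Symbol T g.NT)}
    (hu : ∀ s ∈ u, ∀ A : g.NT, s ≠ Symbol.nonterminal A) (h : g.Produces u v) : False := by
  obtain ⟨r, -, hr⟩ := h
  obtain ⟨p, q, hu', -⟩ := hr.exists_parts
  exact hu _ (by simp [hu']) r.input rfl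

lemma DerivesIn.eq_of_terminals {u v : List (Symbol T g.NT)} {n : ℕ}
    (hu : ∀ s ∈ u, ∀ A : g.NT, s ≠ Symbol.nonterminal A) (h : g.DerivesIn u v n) : v = u := by
  cases h with
  | refl => rfl
  | head hp _ => exact absurd hp (fun h' => no_nonterminal_stuck hu h')

lemma _root_.ContextFreeRule.Rewrites.append_split {N : Type} {r : ContextFreeRule T N}
    {u v t : List (Symbol T N)} (h : r.Rewrites (u ++ v) t) :
    (∃ u', t = u' ++ v ∧ r.Rewrites u u') ∨ (∃ v', t = u ++ v' ∧ r.Rewrites v v') := by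
  induction u generalizing t with
  | nil => exact .inr ⟨t, rfl, h⟩
  | cons x u₁ ih =>
    cases h with
    | head s => exact .inl ⟨r.output ++ u₁, by simp, ContextFreeRule.Rewrites.head u₁⟩
    | cons _ h' =>
      rcases ih h' with ⟨u', rfl, hu⟩ | ⟨v', rfl, hv⟩
      · exact .inl ⟨x :: u', rfl, hu.cons x⟩
      · exact .inr ⟨v', rfl, hv⟩

/-- Split a counted derivation from a concatenation. -/
lemma DerivesIn.split {u v w : List (Symbol T g.NT)} {n : ℕ}
    (h : g.DerivesIn (u ++ v) w n) :
    ∃ w₁ w₂ n₁ n₂, w = w₁ ++ w₂ ∧ n₁ + n₂ = n ∧ g.DerivesIn u w₁ n₁ ∧ g.DerivesIn v w₂ n₂ := by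
  induction n generalizing u v with
  | zero =>
    cases h with
    | refl => exact ⟨u, v, 0, 0, rfl, rfl, .refl _, .refl _⟩
  | succ n ih =>
    cases h with
    | head hp hd =>
      obtain ⟨r, hrmem, hr⟩ := hp
      rcases hr.append_split with ⟨u', rfl, hu⟩ | ⟨v', rfl, hv⟩
      · obtain ⟨w₁, w₂, n₁, n₂, rfl, hn, h1, h2⟩ := ih hd
        exact ⟨w₁, w₂, n₁ + 1, n₂, rfl, by omega, .head ⟨r, hrmem, hu⟩ h1, h2⟩
      · obtain ⟨w₁, w₂, n₁, n₂, rfl, hn, h1, h2⟩ := ih hd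
        exact ⟨w₁, w₂, n₁, n₂ + 1, rfl, by omega, h1, .head ⟨r, hrmem, hv⟩ h2⟩

/-- A rewrite of a singleton nonterminal. -/
lemma rewrites_singleton {N : Type} {r : ContextFreeRule T N} {A : N} {t : List (Symbol T N)}
    (h : r.Rewrites [Symbol.nonterminal A] t) : r.input = A ∧ t = r.output := by
  obtain ⟨p, q, h1, h2⟩ := h.exists_parts
  have hp : p = [] := by
    cases p with
    | nil => rfl
    | cons a l =>
      have := congrArg List.length h1
      simp at this
  subst hp
  simp at h1
  obtain ⟨h1a, h1b⟩ := h1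
  subst h1b
  simp [h2, h1a]

lemma DerivesIn.singleton_head {A : g.NT} {w : List (Symbol T g.NT)} {n : ℕ}
    (h : g.DerivesIn [Symbol.nonterminal A] w (n + 1)) :
    ∃ r ∈ g.rules, r.input = A ∧ g.DerivesIn r.output w n := by
  cases h with
  | head hp hd =>
    obtain ⟨r, hrmem, hr⟩ := hp
    obtain ⟨h1, h2⟩ := rewrites_singleton hr
    exact ⟨r, hrmem, h1, h2 ▸ hd⟩

/-! ### Weak Chomsky-like normal form -/

/-- Every rule is of one of the four simple shapes. -/
def IsWeakCNF (g : ContextFreeGrammar.{0} T) : Prop :=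
  ∀ r ∈ g.rules, r.output = [] ∨ (∃ a : T, r.output = [Symbol.terminal a]) ∨
    (∃ B : g.NT, r.output = [Symbol.nonterminal B]) ∨
    (∃ B C : g.NT, r.output = [Symbol.nonterminal B, Symbol.nonterminal C])

/-- `Den g A X u` : `A` derives the sentential form `X · u`. -/
def Den (g : ContextFreeGrammar.{0} T) (A X : g.NT) (u : List T) : Prop :=
  g.Derives [Symbol.nonterminal A] (Symbol.nonterminal X :: u.map Symbol.terminal)

lemma Den.refl (g : ContextFreeGrammar.{0} T) (A : g.NT) : g.Den A A [] :=
  Derives.refl _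

/-- Extraction of the leftmost leaf of a derivation of a terminal word. -/
lemma leaf_extract (hcnf : g.IsWeakCNF) {C : g.NT} {c : T} {v : List T} {n : ℕ}
    (h : g.DerivesIn [Symbol.nonterminal C] (List.map Symbol.terminal (c :: v)) n) :
    ∃ W : g.NT, (⟨W, [Symbol.terminal c]⟩ ∈ g.rules) ∧ g.Den C W v := by
  induction n using Nat.strong_induction_on generalizing C c v with
  | _ n ih =>
  match n, h with
  | 0, h => cases h
  | (m + 1), h =>
    obtain ⟨r, hrmem, hrin, hd⟩ := h.singleton_head
    have hstep : g.Produces [Symbol.nonterminal C] r.output :=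
      ⟨r, hrmem, hrin ▸ ContextFreeRule.Rewrites.input_output⟩
    rcases hcnf r hrmem with h0 | ⟨a, h1⟩ | ⟨B, h2⟩ | ⟨B, C', h3⟩
    · rw [h0] at hd
      have := hd.eq_of_terminals (by simp)
      simp at this
    · rw [h1] at hd
      have heq := hd.eq_of_terminals (by simp)
      cases v with
      | cons x xs => exfalso; have := congrArg List.length heq; simp at this
      | nil =>
        simp at heq
        subst heq
        refine ⟨C, ?_, Den.refl g C⟩
        have : r = ⟨C, [Symbol.terminal c]⟩ := by
          obtain ⟨ri, ro⟩ := r; simp_all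
        exact this ▸ hrmem
    · rw [h2] at hd
      obtain ⟨W, hW, hden⟩ := ih m (by omega) hd
      exact ⟨W, hW, (h2 ▸ hstep).trans_derives hden⟩
    · rw [h3] at hd
      have hd' : g.DerivesIn ([Symbol.nonterminal B] ++ [Symbol.nonterminal C'])
          (List.map Symbol.terminal (c :: v)) m := hd
      obtain ⟨w₁, w₂, n₁, n₂, hw, hn, hB, hC⟩ := hd'.split
      rw [List.map_eq_append_iff] at hw
      obtain ⟨t₁, t₂, ht, rfl, rfl⟩ := hw
      have hstep' : g.Derives [Symbol.nonterminal C]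
          ([Symbol.nonterminal B] ++ [Symbol.nonterminal C']) := (h3 ▸ hstep).single
      cases t₁ with
      | nil =>
        rw [show t₂ = c :: v by simpa using ht.symm] at hC
        obtain ⟨W, hW, hden⟩ := ih n₂ (by omega) hC
        refine ⟨W, hW, hstep'.trans (Derives.trans ?_ hden)⟩
        simpa using (hB.derives.append_right [Symbol.nonterminal C'])
      | cons x t₁' =>
        have hx : x = c ∧ v = t₁' ++ t₂ := by
          have : c :: v = x :: (t₁' ++ t₂) := by simpa using ht
          simp at this; tauto
        obtain ⟨rfl, rfl⟩ := hx
        obtain ⟨W, hW, hden⟩ := ih n₁ (by omega) hB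
        refine ⟨W, hW, hstep'.trans
          (Derives.trans (hden.append_right [Symbol.nonterminal C']) ?_)⟩
        have h2' := hC.derives.append_left (Symbol.nonterminal W :: List.map Symbol.terminal t₁')
        simpa using h2'

/-- Extraction of the bottom of the left-corner spine from `A ⇒* X (c·u)`. -/
lemma spine_extract (hcnf : g.IsWeakCNF) {A X : g.NT} {c : T} {u : List T} {n : ℕ}
    (h : g.DerivesIn [Symbol.nonterminal A]
      (Symbol.nonterminal X :: List.map Symbol.terminal (c :: u)) n) :
    ∃ (V X' Z W : g.NT) (v₁ v₂ : List T),
      (⟨V, [Symbol.nonterminal X', Symbol.nonterminal Z]⟩ ∈ g.rules) ∧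
      (⟨W, [Symbol.terminal c]⟩ ∈ g.rules) ∧
      g.Derives [Symbol.nonterminal X'] [Symbol.nonterminal X] ∧
      u = v₁ ++ v₂ ∧ g.Den Z W v₁ ∧ g.Den A V v₂ := by
  induction n using Nat.strong_induction_on generalizing A X c u with
  | _ n ih =>
  match n, h with
  | 0, h => cases h
  | (m + 1), h =>
    obtain ⟨r, hrmem, hrin, hd⟩ := h.singleton_head
    have hstep : g.Produces [Symbol.nonterminal A] r.output :=
      ⟨r, hrmem, hrin ▸ ContextFreeRule.Rewrites.input_output⟩
    rcases hcnf r hrmem with h0 | ⟨a, h1⟩ | ⟨B, h2⟩ | ⟨B, C', h3⟩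
    · rw [h0] at hd
      have := hd.eq_of_terminals (by simp)
      simp at this
    · rw [h1] at hd
      have := hd.eq_of_terminals (by simp)
      simp at this
    · rw [h2] at hd
      obtain ⟨V, X', Z, W, v₁, v₂, hr1, hr2, hE, hu, hden1, hden2⟩ := ih m (by omega) hd
      exact ⟨V, X', Z, W, v₁, v₂, hr1, hr2, hE, hu, hden1,
        (h2 ▸ hstep).trans_derives hden2⟩
    · rw [h3] at hd
      have hd' : g.DerivesIn ([Symbol.nonterminal B] ++ [Symbol.nonterminal C'])
          (Symbol.nonterminal X :: List.map Symbol.terminal (c :: u)) m := hd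
      obtain ⟨w₁, w₂, n₁, n₂, hw, hn, hB, hC⟩ := hd'.split
      have hstep' : g.Derives [Symbol.nonterminal A]
          ([Symbol.nonterminal B] ++ [Symbol.nonterminal C']) := (h3 ▸ hstep).single
      cases w₁ with
      | nil =>
        rw [show w₂ = Symbol.nonterminal X :: List.map Symbol.terminal (c :: u) by
          simpa using hw.symm] at hC
        obtain ⟨V, X', Z, W, v₁, v₂, hr1, hr2, hE, hu, hden1, hden2⟩ := ih n₂ (by omega) hC
        refine ⟨V, X', Z, W, v₁, v₂, hr1, hr2, hE, hu, hden1, ?_⟩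
        refine hstep'.trans (Derives.trans ?_ hden2)
        simpa using (hB.derives.append_right [Symbol.nonterminal C'])
      | cons x rest =>
        have hx : x = Symbol.nonterminal X ∧
            rest ++ w₂ = List.map Symbol.terminal (c :: u) := by
          have : x :: (rest ++ w₂) = Symbol.nonterminal X :: List.map Symbol.terminal (c :: u) :=
            by simpa using hw.symm
          simp at this; tauto
        obtain ⟨rfl, hrw⟩ := hx
        rw [eq_comm, List.map_eq_append_iff] at hrw
        obtain ⟨t₁, t₂, ht, hrest, hw₂⟩ := hrw
        symm at hrest hw₂
        subst hrest hw₂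
        cases t₁ with
        | nil =>
          -- w₁ = [nt X]; C' derives the whole terminal word c :: u
          rw [show t₂ = c :: u by simpa using ht.symm] at hC
          obtain ⟨W, hW, hden⟩ := leaf_extract hcnf hC
          refine ⟨A, B, C', W, u, [], ?_, hW, hB.derives, by simp, hden, Den.refl g A⟩
          have : r = ⟨A, [Symbol.nonterminal B, Symbol.nonterminal C']⟩ := by
            obtain ⟨ri, ro⟩ := r; simp_all
          exact this ▸ hrmem
        | cons y t₁' =>
          have hy : y = c ∧ u = t₁' ++ t₂ := by
            have : c :: u = y :: (t₁' ++ t₂) := by simpa using ht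
            simp at this; tauto
          obtain ⟨rfl, rfl⟩ := hy
          obtain ⟨V, X', Z, W, v₁, v₂, hr1, hr2, hE, hu, hden1, hden2⟩ := ih n₁ (by omega) hB
          refine ⟨V, X', Z, W, v₁, v₂ ++ t₂, hr1, hr2, hE, by simp [hu], hden1, ?_⟩
          refine hstep'.trans
            (Derives.trans (hden2.append_right [Symbol.nonterminal C']) ?_)
          have h2' := hC.derives.append_left (Symbol.nonterminal V :: List.map Symbol.terminal v₂)
          simpa using h2'

/-! ### Transformation of an arbitrary grammar into weak CNF -/

section Transform

variable (g : ContextFreeGrammar.{0} T) [Fintype T]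

/-- New nonterminals: old ones, chain nonterminals, and terminal stand-ins. -/
abbrev NewNT := g.NT ⊕ (ContextFreeRule T g.NT × ℕ) ⊕ T

/-- Symbol translation turning every symbol into a (new) nonterminal. -/
def fsym : Symbol T g.NT → Symbol T (NewNT g)
  | .terminal a => .nonterminal (.inr (.inr a))
  | .nonterminal A => .nonterminal (.inl A)

/-- Embedding of old symbols into new symbols. -/
def esym : Symbol T g.NT → Symbol T (NewNT g)
  | .terminal a => .terminal a
  | .nonterminal A => .nonterminal (.inl A)

variable {g}

def lhsN (r : ContextFreeRule T g.NT) : ℕ → NewNT g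
  | 0 => .inl r.input
  | (i + 1) => .inr (.inl (r, i + 1))

/-- The `i`-th chain rule for the original rule `r`. -/
def ruleAt (r : ContextFreeRule T g.NT) (i : ℕ) : ContextFreeRule T (NewNT g) :=
  match (r.output.drop i).head? with
  | none => ⟨lhsN r i, []⟩
  | some s =>
      if r.output.length = i + 1 then ⟨lhsN r i, [fsym g s]⟩
      else ⟨lhsN r i, [fsym g s, .nonterminal (.inr (.inl (r, i + 1)))]⟩

open Classical in
/-- The weak-CNF transformation of `g`. -/
@[reducible] noncomputable def wcnf : ContextFreeGrammar.{0} T where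
  NT := NewNT g
  initial := .inl g.initial
  rules :=
    (g.rules.biUnion fun r =>
      (if r.output = [] then [ruleAt r 0] else (List.range r.output.length).map (ruleAt r)
        ).toFinset) ∪
    (Finset.univ.image fun a : T => ⟨.inr (.inr a), [Symbol.terminal a]⟩)

lemma wcnf_isWeakCNF : (wcnf (g := g)).IsWeakCNF := by
  intro r' hr'
  classical
  simp only [wcnf, Finset.mem_union, Finset.mem_biUnion, Finset.mem_image, List.mem_toFinset]
    at hr'
  rcases hr' with ⟨r, -, hmem⟩ | ⟨a, -, rfl⟩
  · have : ∃ i, r' = ruleAt r i := by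
      split_ifs at hmem with hh
      · simp at hmem; exact ⟨0, hmem⟩
      · simp at hmem; obtain ⟨i, -, h⟩ := hmem; exact ⟨i, h.symm⟩
    obtain ⟨i, rfl⟩ := this
    unfold ruleAt
    rcases hs : (r.output.drop i).head? with - | s
    · left; rfl
    · rcases s with a | A
      · split_ifs
        · right; right; left; exact ⟨_, rfl⟩
        · right; right; right; exact ⟨_, _, rfl⟩
      · split_ifs
        · right; right; left; exact ⟨_, rfl⟩
        · right; right; right; exact ⟨_, _, rfl⟩
  · right; left; exact ⟨a, rfl⟩

lemma mem_wcnf_rules_chain {r : ContextFreeRule T g.NT} (hr : r ∈ g.rules) {i : ℕ}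
    (hi : i < r.output.length ∨ (r.output = [] ∧ i = 0)) :
    ruleAt r i ∈ (wcnf (g := g)).rules := by
  classical
  simp only [wcnf, Finset.mem_union, Finset.mem_biUnion, List.mem_toFinset]
  left
  refine ⟨r, hr, ?_⟩
  split_ifs with hh
  · rcases hi with hi | ⟨-, rfl⟩
    · rw [hh] at hi; simp at hi
    · simp
  · rcases hi with hi | ⟨h0, -⟩
    · simp only [List.mem_map, List.mem_range]; exact ⟨i, hi, rfl⟩
    · exact absurd h0 hh

lemma mem_wcnf_rules_term (a : T) :
    (⟨.inr (.inr a), [Symbol.terminal a]⟩ : ContextFreeRule T (NewNT g))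
      ∈ (wcnf (g := g)).rules := by
  classical
  simp only [wcnf, Finset.mem_union, Finset.mem_image]
  right
  exact ⟨a, Finset.mem_univ a, rfl⟩

lemma fsym_derives_esym (l : List (Symbol T g.NT)) :
    (wcnf (g := g)).Derives (l.map (fsym g)) (l.map (esym g)) := by
  induction l with
  | nil => rfl
  | cons s l ih =>
    have hhead : (wcnf (g := g)).Derives [fsym g s] [esym g s] := by
      cases s with
      | terminal a =>
        exact Produces.single ⟨_, mem_wcnf_rules_term a, ContextFreeRule.Rewrites.input_output⟩
      | nonterminal A => rfl
    have h1 : (wcnf (g := g)).Derives (List.map (fsym g) (s :: l))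
        (esym g s :: l.map (fsym g)) := by
      simpa using hhead.append_right (l.map (fsym g))
    have h2 : (wcnf (g := g)).Derives (esym g s :: l.map (fsym g))
        (esym g s :: l.map (esym g)) := by
      simpa using ih.append_left [esym g s]
    simpa using h1.trans h2

lemma chain_derives {r : ContextFreeRule T g.NT} (hr : r ∈ g.rules) :
    ∀ d i, r.output.length - i = d + 1 →
      (wcnf (g := g)).Derives [Symbol.nonterminal (lhsN r i)]
        ((r.output.drop i).map (fsym g)) := by
  intro d
  induction d with
  | zero =>
    intro i hi
    have hlen : r.output.length = i + 1 := by omega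
    have hlt : i < r.output.length := by omega
    have hdrop : r.output.drop i = [r.output.get ⟨i, hlt⟩] := by
      have h1 := List.drop_eq_getElem_cons hlt
      have h2 : r.output.drop (i + 1) = [] := by
        apply List.drop_eq_nil_of_le; omega
      rw [h2] at h1
      simpa using h1
    have hrule : ruleAt r i = ⟨lhsN r i, [fsym g (r.output.get ⟨i, hlt⟩)]⟩ := by
      unfold ruleAt
      rw [List.head?_drop, List.getElem?_eq_getElem hlt]
      simp [hlen]
    refine Produces.single ⟨ruleAt r i, mem_wcnf_rules_chain hr (Or.inl hlt), ?_⟩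
    rw [hrule, hdrop]
    exact ContextFreeRule.Rewrites.input_output
  | succ d ihd =>
    intro i hi
    have hlt : i < r.output.length := by omega
    have hdrop := List.drop_eq_getElem_cons hlt
    have hrule : ruleAt r i =
        ⟨lhsN r i, [fsym g (r.output.get ⟨i, hlt⟩),
          .nonterminal (.inr (.inl (r, i + 1)))]⟩ := by
      unfold ruleAt
      rw [List.head?_drop, List.getElem?_eq_getElem hlt]
      have : r.output.length ≠ i + 1 := by omega
      simp [this]
    have hstep : (wcnf (g := g)).Produces [Symbol.nonterminal (lhsN r i)]
        [fsym g (r.output.get ⟨i, hlt⟩), .nonterminal (.inr (.inl (r, i + 1)))] := by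
      refine ⟨ruleAt r i, mem_wcnf_rules_chain hr (Or.inl hlt), ?_⟩
      rw [hrule]
      exact ContextFreeRule.Rewrites.input_output
    have ihnext := ihd (i + 1) (by omega)
    have hleft := ihnext.append_left [fsym g (r.output.get ⟨i, hlt⟩)]
    refine hstep.trans_derives ?_
    have hgoal : List.map (fsym g) (r.output.drop i)
        = fsym g (r.output.get ⟨i, hlt⟩) :: List.map (fsym g) (r.output.drop (i + 1)) := by
      rw [hdrop]; rfl
    rw [hgoal]
    simpa [lhsN] using hleft

lemma rule_derives_embed {r : ContextFreeRule T g.NT} (hr : r ∈ g.rules) :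
    (wcnf (g := g)).Derives [Symbol.nonterminal (.inl r.input)] (r.output.map (esym g)) := by
  by_cases hout : r.output = []
  · rw [hout]
    refine Produces.single ⟨ruleAt r 0, mem_wcnf_rules_chain hr (Or.inr ⟨hout, rfl⟩), ?_⟩
    have : ruleAt r 0 = ⟨.inl r.input, []⟩ := by unfold ruleAt; rw [hout]; rfl
    rw [this]
    simpa using (ContextFreeRule.Rewrites.input_output
      (r := (⟨.inl r.input, []⟩ : ContextFreeRule T (NewNT g))))
  · have hpos : 0 < r.output.length := List.length_pos_iff.2 hout
    have h1 := chain_derives (g := g) hr (r.output.length - 1) 0 (by omega)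
    have h2 := fsym_derives_esym (g := g) r.output
    simp only [List.drop_zero] at h1
    exact (show Symbol.nonterminal (lhsN r 0) = Symbol.nonterminal (.inl r.input) by rfl) ▸
      (h1.trans h2)

lemma produces_embed {u v : List (Symbol T g.NT)} (h : g.Produces u v) :
    (wcnf (g := g)).Derives (u.map (esym g)) (v.map (esym g)) := by
  obtain ⟨r, hrmem, hrw⟩ := h
  obtain ⟨p, q, rfl, rfl⟩ := hrw.exists_parts
  have hmid := rule_derives_embed (g := g) hrmem
  have := (hmid.append_left (p.map (esym g))).append_right (q.map (esym g))
  simpa [esym] using this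

lemma derives_embed {u v : List (Symbol T g.NT)} (h : g.Derives u v) :
    (wcnf (g := g)).Derives (u.map (esym g)) (v.map (esym g)) := by
  induction h with
  | refl => rfl
  | tail _ hp ih => exact ih.trans (produces_embed hp)

/-- Projection of new symbols back to strings of old symbols. -/
def psym : Symbol T (NewNT g) → List (Symbol T g.NT)
  | .terminal a => [.terminal a]
  | .nonterminal (.inl A) => [.nonterminal A]
  | .nonterminal (.inr (.inl (r, i))) => r.output.drop i
  | .nonterminal (.inr (.inr a)) => [.terminal a]

lemma psym_fsym (s : Symbol T g.NT) : psym (fsym g s) = [s] := by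
  cases s <;> rfl

lemma psym_esym (s : Symbol T g.NT) : psym (esym g s) = [s] := by
  cases s <;> rfl

lemma flat_psym_map_fsym (l : List (Symbol T g.NT)) :
    (l.map (fsym g)).flatMap psym = l := by
  induction l with
  | nil => rfl
  | cons s l ih => simp [psym_fsym, ih]

lemma wcnf_rule_proj {r' : ContextFreeRule T (NewNT g)} (hr' : r' ∈ (wcnf (g := g)).rules) :
    g.Derives (psym (Symbol.nonterminal r'.input)) (r'.output.flatMap psym) := by
  classical
  simp only [wcnf, Finset.mem_union, Finset.mem_biUnion, Finset.mem_image, List.mem_toFinset]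
    at hr'
  rcases hr' with ⟨r, hrmem, hmem⟩ | ⟨a, -, rfl⟩
  · have hcase : (r.output = [] ∧ r' = ruleAt r 0) ∨
        (∃ i, i < r.output.length ∧ r' = ruleAt r i) := by
      split_ifs at hmem with hh
      · simp at hmem; exact Or.inl ⟨hh, hmem⟩
      · simp at hmem; obtain ⟨i, hi, h⟩ := hmem; exact Or.inr ⟨i, hi, h.symm⟩
    rcases hcase with ⟨h0, rfl⟩ | ⟨i, hi, rfl⟩
    · have : ruleAt r 0 = ⟨.inl r.input, []⟩ := by unfold ruleAt; rw [h0]; rfl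
      rw [this]
      have hp : g.Produces [Symbol.nonterminal r.input] [] :=
        ⟨r, hrmem, by simpa [h0] using ContextFreeRule.Rewrites.input_output (r := r)⟩
      simpa [psym] using hp.single
    · have hdrop := List.drop_eq_getElem_cons hi
      rcases Nat.lt_or_ge (i + 1) r.output.length with hlast | hlast
      · have hrule : ruleAt r i =
            ⟨lhsN r i, [fsym g (r.output.get ⟨i, hi⟩),
              .nonterminal (.inr (.inl (r, i + 1)))]⟩ := by
          unfold ruleAt
          rw [List.head?_drop, List.getElem?_eq_getElem hi]
          have : r.output.length ≠ i + 1 := by omega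
          simp [this]
        rw [hrule]
        have hrhs : ([fsym g (r.output.get ⟨i, hi⟩),
            (.nonterminal (.inr (.inl (r, i + 1))) : Symbol T (NewNT g))]).flatMap psym
            = r.output.drop i := by
          rw [List.flatMap_cons, List.flatMap_cons, List.flatMap_nil, psym_fsym]
          rw [show psym (Symbol.nonterminal (Sum.inr (Sum.inl (r, i + 1))) :
            Symbol T (NewNT g)) = r.output.drop (i + 1) from rfl]
          rw [hdrop]; simp
        rw [hrhs]
        cases i with
        | zero =>
          simp only [lhsN, psym]
          exact Produces.single ⟨r, hrmem, by simpa using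
            ContextFreeRule.Rewrites.input_output⟩
        | succ j => exact Derives.refl _
      · have hlen : r.output.length = i + 1 := by omega
        have hdrop1 : r.output.drop (i + 1) = [] := by
          apply List.drop_eq_nil_of_le; omega
        have hrule : ruleAt r i = ⟨lhsN r i, [fsym g (r.output.get ⟨i, hi⟩)]⟩ := by
          unfold ruleAt
          rw [List.head?_drop, List.getElem?_eq_getElem hi]
          simp [hlen]
        rw [hrule]
        have hrhs : ([fsym g (r.output.get ⟨i, hi⟩)] :
            List (Symbol T (NewNT g))).flatMap psym = r.output.drop i := by
          rw [List.flatMap_cons, List.flatMap_nil, psym_fsym]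
          rw [hdrop, hdrop1]; simp
        rw [hrhs]
        cases i with
        | zero =>
          simp only [lhsN, psym]
          exact Produces.single ⟨r, hrmem, by simpa using
            ContextFreeRule.Rewrites.input_output⟩
        | succ j => exact Derives.refl _
  · simp only [psym, List.flatMap_cons, List.flatMap_nil, List.append_nil]
    rfl

lemma wcnf_produces_proj {u v : List (Symbol T (NewNT g))}
    (h : (wcnf (g := g)).Produces u v) :
    g.Derives (u.flatMap psym) (v.flatMap psym) := by
  obtain ⟨r', hrmem, hrw⟩ := h
  obtain ⟨p, q, rfl, rfl⟩ := hrw.exists_parts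
  have hmid := wcnf_rule_proj (g := g) hrmem
  have := (hmid.append_left (p.flatMap psym)).append_right (q.flatMap psym)
  simpa [List.flatMap_append] using this

lemma wcnf_derives_proj {u v : List (Symbol T (NewNT g))}
    (h : (wcnf (g := g)).Derives u v) :
    g.Derives (u.flatMap psym) (v.flatMap psym) := by
  induction h with
  | refl => rfl
  | tail _ hp ih => exact ih.trans (wcnf_produces_proj hp)

lemma wcnf_language : (wcnf (g := g)).language = g.language := by
  ext w
  constructor
  · intro hw
    have := wcnf_derives_proj (g := g) hw
    have hl : ∀ w : List T, (List.map Symbol.terminal w :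
        List (Symbol T (NewNT g))).flatMap psym = List.map Symbol.terminal w := by
      intro w
      induction w with
      | nil => rfl
      | cons a l ih => simpa [psym] using ih
    rw [hl] at this
    exact this
  · intro hw
    have := derives_embed (g := g) hw
    have hl : (List.map Symbol.terminal w : List (Symbol T g.NT)).map (esym g)
        = List.map Symbol.terminal w := by
      rw [List.map_map]; rfl
    rw [hl] at this
    exact this

end Transform

end ContextFreeGrammar


/-! ### The machine -/

namespace ContextFreeGrammar

variable {T : Type} {h : ContextFreeGrammar.{0} T}

/-- Nonterminals that occur in the grammar. -/
def relevant (h : ContextFreeGrammar.{0} T) : Set h.NT :=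
  {n | n = h.initial ∨ ∃ r ∈ h.rules, n = r.input ∨ Symbol.nonterminal n ∈ r.output}

lemma relevant_initial : h.initial ∈ relevant h := Or.inl rfl

lemma relevant_input {r : ContextFreeRule T h.NT} (hr : r ∈ h.rules) :
    r.input ∈ relevant h := Or.inr ⟨r, hr, Or.inl rfl⟩

lemma relevant_output {r : ContextFreeRule T h.NT} (hr : r ∈ h.rules) {A : h.NT}
    (hA : Symbol.nonterminal A ∈ r.output) : A ∈ relevant h := Or.inr ⟨r, hr, Or.inr hA⟩

lemma relevant_finite (h : ContextFreeGrammar.{0} T) : (relevant h).Finite := by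
  classical
  have hsub : relevant h ⊆ insert h.initial
      (⋃ r ∈ (h.rules : Set (ContextFreeRule T h.NT)),
        insert r.input {n | Symbol.nonterminal n ∈ r.output}) := by
    rintro n (rfl | ⟨r, hr, rfl | hn⟩)
    · exact Set.mem_insert _ _
    · exact Set.mem_insert_iff.2 (Or.inr (Set.mem_biUnion hr (Set.mem_insert _ _)))
    · exact Set.mem_insert_iff.2 (Or.inr (Set.mem_biUnion hr (Set.mem_insert_iff.2 (Or.inr hn))))
  refine Set.Finite.subset (Set.Finite.insert _ ?_) hsub
  refine Set.Finite.biUnion (h.rules.finite_toSet) ?_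
  intro r _
  refine Set.Finite.insert _ ?_
  have : {n : h.NT | Symbol.nonterminal n ∈ r.output} ⊆
      ↑(r.output.filterMap fun s => match s with
        | Symbol.nonterminal n => some n
        | Symbol.terminal _ => none).toFinset := by
    intro n hn
    simp only [List.coe_toFinset, Set.mem_setOf_eq, List.mem_filterMap]
    exact ⟨Symbol.nonterminal n, hn, rfl⟩
  exact Set.Finite.subset (List.toFinset _).finite_toSet this

/-- Relevant nonterminals as a subtype. -/
@[reducible] def NR (h : ContextFreeGrammar.{0} T) : Type := relevant h

/-- Machine states (also used as stack symbols). -/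
@[reducible] def MSt (h : ContextFreeGrammar.{0} T) : Type := Option (NR h × NR h) × T × Option T

/-- `A` derives exactly `[X]`. -/
lemma den_nil_iff {A X : h.NT} : h.Den A X [] ↔
    h.Derives [Symbol.nonterminal A] [Symbol.nonterminal X] := Iff.rfl

/-- Key composition: one step down the spine. -/
lemma den_compose {A V X' X Z W : h.NT} {ch : T} {u₁ u₃ : List T}
    (hr1 : (⟨V, [Symbol.nonterminal X', Symbol.nonterminal Z]⟩ :
      ContextFreeRule T h.NT) ∈ h.rules)
    (hr2 : (⟨W, [Symbol.terminal ch]⟩ : ContextFreeRule T h.NT) ∈ h.rules)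
    (hE : h.Derives [Symbol.nonterminal X'] [Symbol.nonterminal X])
    (hAV : h.Den A V u₃) (hZW : h.Den Z W u₁) :
    h.Den A X (ch :: u₁ ++ u₃) := by
  unfold Den at *
  refine hAV.trans ?_
  have h1 : h.Produces (Symbol.nonterminal V :: List.map Symbol.terminal u₃)
      (Symbol.nonterminal X' :: Symbol.nonterminal Z :: List.map Symbol.terminal u₃) :=
    ⟨_, hr1, by
      simpa using ContextFreeRule.rewrites_of_exists_parts
        (⟨V, [Symbol.nonterminal X', Symbol.nonterminal Z]⟩ : ContextFreeRule T h.NT)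
        [] (List.map Symbol.terminal u₃)⟩
  refine h1.trans_derives ?_
  have h2 := (hZW.append_right (List.map Symbol.terminal u₃)).append_left
    [Symbol.nonterminal X']
  refine Derives.trans (show h.Derives
    (Symbol.nonterminal X' :: Symbol.nonterminal Z :: List.map Symbol.terminal u₃)
    (Symbol.nonterminal X' :: Symbol.nonterminal W ::
      (List.map Symbol.terminal u₁ ++ List.map Symbol.terminal u₃)) by simpa using h2) ?_
  have h3 : h.Produces
      (Symbol.nonterminal X' :: Symbol.nonterminal W ::
        (List.map Symbol.terminal u₁ ++ List.map Symbol.terminal u₃))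
      (Symbol.nonterminal X' :: Symbol.terminal ch ::
        (List.map Symbol.terminal u₁ ++ List.map Symbol.terminal u₃)) :=
    ⟨_, hr2, by
      simpa using ContextFreeRule.rewrites_of_exists_parts
        (⟨W, [Symbol.terminal ch]⟩ : ContextFreeRule T h.NT)
        [Symbol.nonterminal X']
        (List.map Symbol.terminal u₁ ++ List.map Symbol.terminal u₃)⟩
  refine h3.trans_derives ?_
  have h4 := hE.append_right (Symbol.terminal ch ::
    (List.map Symbol.terminal u₁ ++ List.map Symbol.terminal u₃))
  simpa using h4


/-! ### The MPDA built from a weak-CNF grammar -/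

/-- The transition relation of the machine. -/
inductive MTrans (h : ContextFreeGrammar.{0} T) :
    MSt h × Option (MSt h) × Option (MSt h) × MSt h → Prop
  | push (A X Z W : NR h) (X' V : h.NT) (hV : V ∈ relevant h) (b c : T)
      (la' las : Option T) (bs : T)
      (hr1 : (⟨V, [Symbol.nonterminal X', Symbol.nonterminal Z.1]⟩ :
        ContextFreeRule T h.NT) ∈ h.rules)
      (hr2 : (⟨W.1, [Symbol.terminal c]⟩ : ContextFreeRule T h.NT) ∈ h.rules)
      (hE : h.Derives [Symbol.nonterminal X'] [Symbol.nonterminal X.1]) :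
      MTrans h ((some (A, X), b, some c), none, some (some (A, ⟨V, hV⟩), bs, las),
        (some (Z, W), c, la'))
  | climb (A X Z W : NR h) (X' V : h.NT) (b c : T) (la' : Option T)
      (hr1 : (⟨V, [Symbol.nonterminal X', Symbol.nonterminal Z.1]⟩ :
        ContextFreeRule T h.NT) ∈ h.rules)
      (hr2 : (⟨W.1, [Symbol.terminal c]⟩ : ContextFreeRule T h.NT) ∈ h.rules)
      (hE : h.Derives [Symbol.nonterminal X'] [Symbol.nonterminal X.1])
      (hAV : h.Derives [Symbol.nonterminal A.1] [Symbol.nonterminal V]) :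
      MTrans h ((some (A, X), b, some c), none, none, (some (Z, W), c, la'))
  | finish (A X : NR h) (X' V Z W' : h.NT) (hV : V ∈ relevant h) (b c : T) (la' : Option T)
      (hr1 : (⟨V, [Symbol.nonterminal X', Symbol.nonterminal Z]⟩ :
        ContextFreeRule T h.NT) ∈ h.rules)
      (hr2 : (⟨W', [Symbol.terminal c]⟩ : ContextFreeRule T h.NT) ∈ h.rules)
      (hE : h.Derives [Symbol.nonterminal X'] [Symbol.nonterminal X.1])
      (hZW : h.Derives [Symbol.nonterminal Z] [Symbol.nonterminal W']) :
      MTrans h ((some (A, X), b, some c), none, none, (some (A, ⟨V, hV⟩), c, la'))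
  | pop (A X : NR h) (X' V Z W' : h.NT) (b c : T) (γ : MSt h)
      (hr1 : (⟨V, [Symbol.nonterminal X', Symbol.nonterminal Z]⟩ :
        ContextFreeRule T h.NT) ∈ h.rules)
      (hr2 : (⟨W', [Symbol.terminal c]⟩ : ContextFreeRule T h.NT) ∈ h.rules)
      (hE : h.Derives [Symbol.nonterminal X'] [Symbol.nonterminal X.1])
      (hZW : h.Derives [Symbol.nonterminal Z] [Symbol.nonterminal W'])
      (hAV : h.Derives [Symbol.nonterminal A.1] [Symbol.nonterminal V])
      (hγ : γ.2.1 = c) :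
      MTrans h ((some (A, X), b, some c), some γ, none, γ)

/-- The machine. -/
def mpda (h : ContextFreeGrammar.{0} T) : MPDA (MSt h) (Option T × T) (MSt h) where
  trans := {t | MTrans h t}
  trans_valid := by
    rintro t ht
    cases ht with
    | push => left; rfl
    | climb => left; rfl
    | finish => left; rfl
    | pop => right; rfl
  out := fun q => (q.2.2, q.2.1)
  init := { q | ∃ (W : NR h) (b : T) (la : Option T),
      q = (some (⟨h.initial, relevant_initial⟩, W), b, la) ∧
      (⟨W.1, [Symbol.terminal b]⟩ : ContextFreeRule T h.NT) ∈ h.rules }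
  final := { q | q.1 = none ∧ q.2.2 = none }

lemma mpda_popNormalized (h : ContextFreeGrammar.{0} T) : (mpda h).PopNormalized := by
  refine ⟨id, ?_⟩
  rintro q γ q' ht
  cases ht
  rfl

/-- Denotation of a stack. -/
def Rems (h : ContextFreeGrammar.{0} T) : List (MSt h) → List T → Prop
  | [], _ => False
  | γ :: st, u =>
      match γ.1 with
      | none => u = [] ∧ st = []
      | some (A, X) => ∃ u₁ u₂, u = u₁ ++ u₂ ∧ h.Den A.1 X.1 u₁ ∧ Rems h st u₂

/-- Denotation of a configuration. -/
def Rem (h : ContextFreeGrammar.{0} T) : Option (NR h × NR h) → List (MSt h) → List T → Prop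
  | none, st, u => st = [] ∧ u = []
  | some (A, X), st, u => ∃ u₁ u₂, u = u₁ ++ u₂ ∧ h.Den A.1 X.1 u₁ ∧ Rems h st u₂


lemma nextWord_cons {b c : T} {u : List T} :
    nextWord (b :: c :: u) = (some c, b) :: nextWord (c :: u) := rfl

lemma sound_aux (h : ContextFreeGrammar.{0} T) :
    ∀ (cs : List (MSt h × List (MSt h))) (c : MSt h × List (MSt h)),
    List.Chain' (mpda h).Move (c :: cs) →
    (∃ qf ∈ (mpda h).final, (c :: cs).getLast? = some (qf, [])) →
    ∃ u : List T, (c :: cs).map (fun x => (mpda h).out x.1) = nextWord (c.1.2.1 :: u) ∧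
      Rem h c.1.1 c.2 u := by
  intro cs
  induction cs with
  | nil =>
    rintro c - ⟨qf, hqf, hlast⟩
    obtain ⟨hq1, hq2⟩ := hqf
    simp only [List.getLast?_singleton, Option.some_inj] at hlast
    refine ⟨[], ?_, ?_⟩
    · simp [mpda, hlast, hq2, nextWord]
    · rw [hlast]
      have h1 : (qf, ([] : List (MSt h))).1.1 = none := hq1
      rw [h1]
      exact ⟨rfl, rfl⟩
  | cons c2 cs' ih =>
    rintro c hchain ⟨qf, hqf, hlast⟩
    replace hchain := List.isChain_cons_cons.1 hchain
    obtain ⟨hmove, hchain'⟩ := hchain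
    rw [List.getLast?_cons_cons] at hlast
    obtain ⟨u2, hout2, hrem2⟩ := ih c2 hchain' ⟨qf, hqf, hlast⟩
    obtain ⟨q, γ, γ', q', α, ht, hc, hc2, -⟩ := hmove
    subst hc hc2
    cases ht with
    | push A X Z W X' V hV b ch la' las bs hr1 hr2 hE =>
      obtain ⟨u₁, u₂, hu2, hZW, hrems⟩ := hrem2
      obtain ⟨u₃, u₄, hu₂, hAV, hrα⟩ := hrems
      refine ⟨ch :: u2, ?_, ?_⟩
      · rw [List.map_cons, hout2, nextWord_cons]; rfl
      · refine ⟨ch :: u₁ ++ u₃, u₄, by simp [hu2, hu₂], den_compose hr1 hr2 hE hAV hZW, hrα⟩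
    | climb A X Z W X' V b ch la' hr1 hr2 hE hAV =>
      obtain ⟨u₁, u₂, hu2, hZW, hrems⟩ := hrem2
      refine ⟨ch :: u2, ?_, ?_⟩
      · rw [List.map_cons, hout2, nextWord_cons]; rfl
      · have hAV' : h.Den A.1 V [] := hAV
        have hd := den_compose hr1 hr2 hE hAV' hZW
        rw [List.append_nil] at hd
        exact ⟨ch :: u₁, u₂, by simp [hu2], hd, hrems⟩
    | finish A X X' V Z W' hV b ch la' hr1 hr2 hE hZW =>
      obtain ⟨u₁, u₂, hu2, hAV, hrems⟩ := hrem2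
      refine ⟨ch :: u2, ?_, ?_⟩
      · rw [List.map_cons, hout2, nextWord_cons]; rfl
      · have hZW' : h.Den Z W' [] := hZW
        have hd := den_compose hr1 hr2 hE hAV hZW'
        exact ⟨ch :: u₁, u₂, by simp [hu2], by simpa using hd, hrems⟩
    | pop A X X' V Z W' b ch γp hr1 hr2 hE hZW hAV hγ =>
      refine ⟨ch :: u2, ?_, ?_⟩
      · rw [List.map_cons, hout2, hγ, nextWord_cons]; rfl
      · have hAV' : h.Den A.1 V [] := hAV
        have hZW' : h.Den Z W' [] := hZW
        have hd := den_compose hr1 hr2 hE hAV' hZW'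
        refine ⟨[ch], u2, rfl, by simpa using hd, ?_⟩
        obtain ⟨p, pb, pla⟩ := q'
        cases p with
        | none =>
          obtain ⟨hα, hu2⟩ := hrem2
          exact ⟨hu2, hα⟩
        | some p' =>
          obtain ⟨A', X''⟩ := p'
          exact hrem2

lemma mpda_sound (h : ContextFreeGrammar.{0} T) {w : List (Option T × T)}
    (hw : w ∈ (mpda h).language) : ∃ v ∈ h.language, w = nextWord v := by
  obtain ⟨cs, ⟨hchain, ⟨q0, hq0, g0, hhead⟩, hlastf⟩, hw⟩ := hw
  cases cs with
  | nil => simp at hhead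
  | cons c cs' =>
    simp only [List.head?_cons, Option.some_inj] at hhead
    obtain ⟨u, hout, hrem⟩ := sound_aux h cs' c hchain hlastf
    obtain ⟨W, b, la, hq0eq, hWrule⟩ := hq0
    subst hq0eq
    rw [hhead] at hout hrem
    obtain ⟨u₁, u₂, hu, hden, hrems⟩ := hrem
    obtain ⟨p, gb, gla⟩ := g0
    have hu₂ : u₂ = [] := by
      cases p with
      | none => exact hrems.1
      | some p' =>
        obtain ⟨A', X''⟩ := p'
        obtain ⟨x1, x2, hx, hd, hfalse⟩ := hrems
        cases hfalse
    subst hu₂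
    rw [List.append_nil] at hu
    subst hu
    refine ⟨b :: u, ?_, ?_⟩
    · show h.Derives _ _
      refine Derives.trans hden ?_
      refine Produces.single ⟨_, hWrule, ?_⟩
      simpa using ContextFreeRule.rewrites_of_exists_parts
        (⟨W.1, [Symbol.terminal b]⟩ : ContextFreeRule T h.NT) [] (List.map Symbol.terminal u)
    · rw [hw, hhead, hout]

/-- Stack well-formedness for the completeness direction. -/
def GoodStack (h : ContextFreeGrammar.{0} T) : List (MSt h) → T → List T → Prop
  | [], _, _ => False
  | γ :: st, ls, v => γ.2.1 = ls ∧
      (match γ.1 with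
      | none => γ.2.2 = none ∧ v = [] ∧ st = []
      | some (A, X) => ∃ u₃ u₄, v = u₃ ++ u₄ ∧ h.Den A.1 X.1 u₃ ∧ u₃ ≠ [] ∧
          γ.2.2 = u₃.head? ∧ ∃ l, u₃.getLast? = some l ∧ GoodStack h st l u₄)

lemma GoodStack.ne_nil {st : List (MSt h)} {l : T} {v : List T}
    (hst : GoodStack h st l v) : st ≠ [] := by
  cases st with
  | nil => exact hst.elim
  | cons _ _ => simp

lemma complete_aux (hcnf : h.IsWeakCNF) :
    ∀ (n : ℕ) (u₃ u₄ : List T), (u₃ ++ u₄).length ≤ n →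
    ∀ (A X : NR h) (b : T) (st : List (MSt h)) (l : T),
      u₃.getLast? = some l →
      h.Den A.1 X.1 u₃ →
      GoodStack h st l u₄ →
      ∃ cs, List.Chain' (mpda h).Move (((some (A, X), b, u₃.head?), st) :: cs) ∧
        (∃ qf ∈ (mpda h).final,
          ((((some (A, X), b, u₃.head?), st)) :: cs).getLast? = some (qf, [])) ∧
        ((((some (A, X), b, u₃.head?), st)) :: cs).map (fun x => (mpda h).out x.1) =
          nextWord (b :: (u₃ ++ u₄)) := by
  intro n
  induction n with
  | zero =>
    intro u₃ u₄ hlen A X b st l hl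
    cases u₃ with
    | nil => simp at hl
    | cons x xs => simp at hlen
  | succ n ihn =>
    intro u₃ u₄ hlen A X b st l hl hden hst
    cases u₃ with
    | nil => simp at hl
    | cons ch u₁ =>
    obtain ⟨m, hm⟩ := hden.derivesIn
    obtain ⟨V, X', Z, W, v₁, v₂, hr1, hr2, hE, hu, hZW, hAV⟩ := spine_extract hcnf hm
    have hVr : V ∈ relevant h := relevant_input hr1
    have hZr : Z ∈ relevant h := relevant_output hr1 (by simp)
    have hWr : W ∈ relevant h := relevant_input hr2
    subst hu
    cases v₂ with
    | nil =>
      cases v₁ with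
      | nil =>
        -- u₃ = [ch] : pop move
        simp only [List.append_nil] at hl hlen ⊢
        have hch : ch = l := by simpa using hl
        subst hch
        have hpoptrans : ∀ γ : MSt h, γ.2.1 = ch →
            MTrans h (((some (A, X), b, some ch) : MSt h), some γ, none, γ) :=
          fun γ hγ => MTrans.pop A X X' V Z W b ch γ hr1 hr2 hE hZW hAV hγ
        cases st with
        | nil => exact hst.elim
        | cons γ st' =>
        obtain ⟨hγ1, hst2⟩ := hst
        cases hpg : γ.1 with
        | none =>
          rw [hpg] at hst2
          obtain ⟨hγla, hu₄, hst'⟩ := hst2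
          subst hu₄ hst'
          have houtγ : (mpda h).out γ = (none, ch) := by
            show (γ.2.2, γ.2.1) = _
            rw [hγla, hγ1]
          refine ⟨[(γ, [])], ?_, ?_, ?_⟩
          · refine List.isChain_cons_cons.2 ⟨?_, List.isChain_singleton _⟩
            exact ⟨_, some γ, none, _, [], hpoptrans _ hγ1, rfl, rfl, by simp⟩
          · exact ⟨γ, ⟨hpg, hγla⟩, rfl⟩
          · simp only [List.map_cons, List.map_nil]
            rw [houtγ]
            rfl
        | some p' =>
          obtain ⟨A', X''⟩ := p'
          rw [hpg] at hst2
          obtain ⟨u₃', u₄', hv, hden', hne', hla', l', hl', hst'⟩ := hst2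
          subst hv
          obtain ⟨cs₂, hchain₂, hfin₂, hout₂⟩ := ihn u₃' u₄' (by
              simp at hlen ⊢; omega)
            A' X'' ch st' l' hl' hden' hst'
          have hγeq : γ = ((some (A', X''), ch, u₃'.head?) : MSt h) := by
            obtain ⟨p, gb, gla⟩ := γ
            rw [show p = some (A', X'') from hpg, show gb = ch from hγ1,
              show gla = u₃'.head? from hla']
          refine ⟨((some (A', X''), ch, u₃'.head?), st') :: cs₂, ?_, ?_, ?_⟩
          · refine List.isChain_cons_cons.2 ⟨?_, hchain₂⟩
            refine ⟨_, some γ, none, _, st', hpoptrans _ hγ1, rfl, ?_, by simp⟩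
            rw [hγeq]
            rfl
          · obtain ⟨qf, hqf, hlast⟩ := hfin₂
            exact ⟨qf, hqf, by rw [List.getLast?_cons_cons]; exact hlast⟩
          · rw [List.map_cons, hout₂]
            rfl
      | cons y v₁' =>
        -- climb move
        simp only [List.append_nil] at hl hlen hZW ⊢
        have hlv : (y :: v₁').getLast? = some l := by
          rwa [List.getLast?_cons_cons] at hl
        obtain ⟨cs₂, hchain₂, hfin₂, hout₂⟩ := ihn (y :: v₁') u₄ (by simp at hlen ⊢; omega)
          ⟨Z, hZr⟩ ⟨W, hWr⟩ ch st l hlv hZW hst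
        refine ⟨((some (⟨Z, hZr⟩, ⟨W, hWr⟩), ch, (y :: v₁').head?), st) :: cs₂, ?_, ?_, ?_⟩
        · refine List.isChain_cons_cons.2 ⟨?_, hchain₂⟩
          refine ⟨_, none, none, _, st, ?_, rfl, rfl, by simpa using hst.ne_nil⟩
          exact MTrans.climb A X ⟨Z, hZr⟩ ⟨W, hWr⟩ X' V b ch _ hr1 hr2 hE hAV
        · obtain ⟨qf, hqf, hlast⟩ := hfin₂
          exact ⟨qf, hqf, by rw [List.getLast?_cons_cons]; exact hlast⟩
        · rw [List.map_cons, hout₂]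
          rfl
    | cons z v₂' =>
      cases v₁ with
      | nil =>
        -- finish move
        simp only [List.nil_append] at hl hlen hAV ⊢
        have hlv : (z :: v₂').getLast? = some l := by
          rwa [List.getLast?_cons_cons] at hl
        obtain ⟨cs₂, hchain₂, hfin₂, hout₂⟩ := ihn (z :: v₂') u₄ (by simp at hlen ⊢; omega)
          A ⟨V, hVr⟩ ch st l hlv hAV hst
        refine ⟨((some (A, ⟨V, hVr⟩), ch, (z :: v₂').head?), st) :: cs₂, ?_, ?_, ?_⟩
        · refine List.isChain_cons_cons.2 ⟨?_, hchain₂⟩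
          refine ⟨_, none, none, _, st, ?_, rfl, rfl, by simpa using hst.ne_nil⟩
          exact MTrans.finish A X X' V Z W hVr b ch _ hr1 hr2 hE hZW
        · obtain ⟨qf, hqf, hlast⟩ := hfin₂
          exact ⟨qf, hqf, by rw [List.getLast?_cons_cons]; exact hlast⟩
        · rw [List.map_cons, hout₂]
          rfl
      | cons y v₁' =>
        -- push move
        have hlv₂ : (z :: v₂').getLast? = some l := by
          rw [show ch :: (y :: v₁' ++ z :: v₂') = (ch :: y :: v₁') ++ (z :: v₂') from by simp,
            List.getLast?_append_cons] at hl
          exact hl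
        obtain ⟨lv₁, hlv₁⟩ : ∃ lv₁, (y :: v₁').getLast? = some lv₁ :=
          ⟨(y :: v₁').getLast (by simp), List.getLast?_eq_getLast _⟩
        have hgsnew : GoodStack h
            (((some (A, ⟨V, hVr⟩), lv₁, (z :: v₂').head?) : MSt h) :: st) lv₁
            ((z :: v₂') ++ u₄) := by
          refine ⟨rfl, (z :: v₂'), u₄, rfl, hAV, by simp, rfl, l, hlv₂, hst⟩
        obtain ⟨cs₂, hchain₂, hfin₂, hout₂⟩ := ihn (y :: v₁') ((z :: v₂') ++ u₄)
          (by simp at hlen ⊢; omega) ⟨Z, hZr⟩ ⟨W, hWr⟩ ch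
          (((some (A, ⟨V, hVr⟩), lv₁, (z :: v₂').head?) : MSt h) :: st) lv₁ hlv₁ hZW hgsnew
        refine ⟨((some (⟨Z, hZr⟩, ⟨W, hWr⟩), ch, (y :: v₁').head?),
          ((some (A, ⟨V, hVr⟩), lv₁, (z :: v₂').head?) : MSt h) :: st) :: cs₂, ?_, ?_, ?_⟩
        · refine List.isChain_cons_cons.2 ⟨?_, hchain₂⟩
          refine ⟨_, none, some ((some (A, ⟨V, hVr⟩), lv₁, (z :: v₂').head?) : MSt h), _, st,
            ?_, rfl, rfl, by simpa using hst.ne_nil⟩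
          exact MTrans.push A X ⟨Z, hZr⟩ ⟨W, hWr⟩ X' V hVr b ch _ _ _ hr1 hr2 hE
        · obtain ⟨qf, hqf, hlast⟩ := hfin₂
          exact ⟨qf, hqf, by rw [List.getLast?_cons_cons]; exact hlast⟩
        · rw [List.map_cons, hout₂]
          simp only [List.cons_append, List.append_assoc]
          rfl


lemma mpda_complete (hcnf : h.IsWeakCNF) {v : List T} (hv : v ∈ h.language)
    (hlen2 : 2 ≤ v.length) : nextWord v ∈ (mpda h).language := by
  cases v with
  | nil => simp at hlen2
  | cons b rest =>
  have hrne : rest ≠ [] := by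
    cases rest with
    | nil => simp at hlen2
    | cons x xs => simp
  obtain ⟨m, hm⟩ := (hv : h.Derives _ _).derivesIn
  obtain ⟨W, hWrule, hden⟩ := leaf_extract hcnf hm
  have hWr : W ∈ relevant h := relevant_input hWrule
  obtain ⟨lr, hlr⟩ : ∃ lr, rest.getLast? = some lr :=
    ⟨rest.getLast hrne, List.getLast?_eq_getLast _⟩
  have hgs : GoodStack h [((none, lr, none) : MSt h)] lr [] :=
    ⟨rfl, rfl, rfl, rfl⟩
  obtain ⟨cs, hchain, hfin, hout⟩ := complete_aux hcnf (rest ++ []).length rest [] le_rfl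
    ⟨h.initial, relevant_initial⟩ ⟨W, hWr⟩ b [((none, lr, none) : MSt h)] lr hlr hden hgs
  refine ⟨((some (⟨h.initial, relevant_initial⟩, ⟨W, hWr⟩), b, rest.head?),
      [((none, lr, none) : MSt h)]) :: cs, ⟨hchain, ?_, hfin⟩, ?_⟩
  · exact ⟨(some (⟨h.initial, relevant_initial⟩, ⟨W, hWr⟩), b, rest.head?),
      ⟨⟨W, hWr⟩, b, rest.head?, rfl, hWrule⟩, (none, lr, none), rfl⟩
  · rw [List.append_nil] at hout
    exact hout.symm

end ContextFreeGrammar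

/-- For every context-free language `L` over `S` all of whose
strings have length at least 2 there exists a pop-normalized MPDA `A` with
`L(A) = Next(L)`. -/
theorem exists_popNormalized_mpda_for_next (S : Type) [Fintype S] (L : Language S)
    (h : L.IsContextFree) (hlen : ∀ w ∈ L, 2 ≤ w.length) :
    ∃ (Q Γ : Type) (_ : Fintype Q) (_ : Fintype Γ) (M : MPDA Q (Option S × S) Γ),
      M.PopNormalized ∧ M.language = nextLang L := by
  classical
  obtain ⟨g, hg⟩ := h
  have hlang : (ContextFreeGrammar.wcnf (g := g)).language = L := by
    rw [ContextFreeGrammar.wcnf_language, hg]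
  have hcnf : (ContextFreeGrammar.wcnf (g := g)).IsWeakCNF :=
    ContextFreeGrammar.wcnf_isWeakCNF
  set h' := ContextFreeGrammar.wcnf (g := g) with hh'
  letI : Fintype (ContextFreeGrammar.NR h') :=
    (ContextFreeGrammar.relevant_finite h').fintype
  letI instM : Fintype (ContextFreeGrammar.MSt h') :=
    inferInstanceAs (Fintype (Option (ContextFreeGrammar.NR h' ×
      ContextFreeGrammar.NR h') × S × Option S))
  refine ⟨ContextFreeGrammar.MSt h', ContextFreeGrammar.MSt h', instM, instM,
    ContextFreeGrammar.mpda h', ContextFreeGrammar.mpda_popNormalized h', ?_⟩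
  ext w
  constructor
  · intro hw
    obtain ⟨v, hv, rfl⟩ := ContextFreeGrammar.mpda_sound h' hw
    exact ⟨v, hlang ▸ hv, rfl⟩
  · rintro ⟨v, hv, rfl⟩
    exact ContextFreeGrammar.mpda_complete hcnf (by rw [hlang]; exact hv) (hlen v hv)
end

section
/- For every spine grammar there exists a strongly equivalent normalized spine grammar, i.e., a normalized spine grammar generating exactly the same tree language. -/
/-! ### Binary trees over ranked alphabets (ranks 0, 1, 2) -/

/-- Trees with leaf labels `L`, unary labels `U` and binary labels `B`. -/
inductive Tree3 (L U B : Type) : Type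
  | leaf : L → Tree3 L U B
  | un : U → Tree3 L U B → Tree3 L U B
  | bin : B → Tree3 L U B → Tree3 L U B → Tree3 L U B

namespace Tree3

/-- A relabeling `(f0, f1, f2)` applied node-wise. -/
def map {L U B L' U' B' : Type} (f0 : L → L') (f1 : U → U') (f2 : B → B') :
    Tree3 L U B → Tree3 L' U' B'
  | leaf a => leaf (f0 a)
  | un u t => un (f1 u) (map f0 f1 f2 t)
  | bin b t₁ t₂ => bin (f2 b) (map f0 f1 f2 t₁) (map f0 f1 f2 t₂)

/-- The tree contains a leaf labeled `a`. -/
def hasLeaf {L U B : Type} (a : L) : Tree3 L U B → Prop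
  | leaf x => x = a
  | un _ t => t.hasLeaf a
  | bin _ t₁ t₂ => t₁.hasLeaf a ∨ t₂.hasLeaf a

/-- The tree contains no unary symbol. -/
def noUnary {L U B : Type} : Tree3 L U B → Prop
  | leaf _ => True
  | un _ _ => False
  | bin _ t₁ t₂ => t₁.noUnary ∧ t₂.noUnary

/-- Number of nodes. -/
def size {L U B : Type} : Tree3 L U B → ℕ
  | leaf _ => 1
  | un _ t => t.size + 1
  | bin _ t₁ t₂ => t₁.size + t₂.size + 1

end Tree3

/-- One-hole contexts over the same signature. -/
inductive Ctx3 (L U B : Type) : Type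
  | hole : Ctx3 L U B
  | un : U → Ctx3 L U B → Ctx3 L U B
  | binL : B → Ctx3 L U B → Tree3 L U B → Ctx3 L U B
  | binR : B → Tree3 L U B → Ctx3 L U B → Ctx3 L U B

/-- Substitution of a tree into the hole of a context. -/
def Ctx3.subst {L U B : Type} : Ctx3 L U B → Tree3 L U B → Tree3 L U B
  | .hole, t => t
  | .un u c, t => .un u (c.subst t)
  | .binL b c s, t => .bin b (c.subst t) s
  | .binR b s c, t => .bin b s (c.subst t)

/-- The root-to-hole path of the context follows the direction `d` at every
binary symbol on it (`false` = first child, `true` = second child). -/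
def Ctx3.SpineOk {L U B : Type} (d : B → Bool) : Ctx3 L U B → Prop
  | .hole => True
  | .un _ c => c.SpineOk d
  | .binL b c _ => d b = false ∧ c.SpineOk d
  | .binR b _ c => d b = true ∧ c.SpineOk d

/-! ### Simple monadic context-free tree grammars and spine grammars -/

/-- Sentential forms: trees over binary terminals `T2` and unary nonterminals
`N1`, with leaves labeled by nullary nonterminals `N0` or nullary terminals
`T0`. -/
abbrev SForm (N0 N1 T0 T2 : Type) := Tree3 (N0 ⊕ T0) N1 T2

/-- A simple monadic context-free tree grammar (sCFTG). -/
structure SCFTG (N0 N1 T0 T2 : Type) where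
  start : N0
  P0 : Set (N0 × SForm N0 N1 T0 T2)
  P1 : Set (N1 × Ctx3 (N0 ⊕ T0) N1 T2)
  P0_fin : P0.Finite
  P1_fin : P1.Finite

namespace SCFTG

variable {N0 N1 T0 T2 : Type}

/-- One derivation step. -/
inductive Step (G : SCFTG N0 N1 T0 T2) :
    SForm N0 N1 T0 T2 → SForm N0 N1 T0 T2 → Prop
  | p0 (C : Ctx3 (N0 ⊕ T0) N1 T2) (n : N0) (r : SForm N0 N1 T0 T2) :
      (n, r) ∈ G.P0 → Step G (C.subst (.leaf (.inl n))) (C.subst r)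
  | p1 (C : Ctx3 (N0 ⊕ T0) N1 T2) (n : N1) (r : Ctx3 (N0 ⊕ T0) N1 T2)
      (t' : SForm N0 N1 T0 T2) :
      (n, r) ∈ G.P1 → Step G (C.subst (.un n t')) (C.subst (r.subst t'))

/-- Derivation: reflexive-transitive closure of `Step`. -/
def Derives (G : SCFTG N0 N1 T0 T2) :
    SForm N0 N1 T0 T2 → SForm N0 N1 T0 T2 → Prop :=
  Relation.ReflTransGen G.Step

/-- Embedding of terminal trees into sentential forms. -/
def embed (t : Tree3 T0 Empty T2) : SForm N0 N1 T0 T2 :=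
  t.map Sum.inr (fun e => e.elim) id

/-- Set of terminal trees derivable from the nullary nonterminal `n`. -/
def derivFrom (G : SCFTG N0 N1 T0 T2) (n : N0) : Set (Tree3 T0 Empty T2) :=
  { t | G.Derives (.leaf (.inl n)) (embed t) }

/-- The generated tree language `T(G)`. -/
def lang (G : SCFTG N0 N1 T0 T2) : Set (Tree3 T0 Empty T2) :=
  G.derivFrom G.start

/-- `G` together with `d` is a spine grammar: in every unary production the
root-to-hole path follows the spine direction `d`. -/
def IsSpine (G : SCFTG N0 N1 T0 T2) (d : T2 → Bool) : Prop :=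
  ∀ p ∈ G.P1, Ctx3.SpineOk d p.2

/-- Normal form of spine grammars: start, chain and terminal productions;
the start nonterminal does not occur in right-hand sides. -/
def InNormalForm (G : SCFTG N0 N1 T0 T2) : Prop :=
  (∀ p ∈ G.P0, ∃ α : T0,
      p.2 = .leaf (.inr α) ∨ ∃ b : N1, p.2 = .un b (.leaf (.inr α))) ∧
  (∀ p ∈ G.P1,
      (∃ b₁ b₂ : N1, p.2 = .un b₁ (.un b₂ .hole)) ∨
      (∃ (σ : T2) (a : N0), a ≠ G.start ∧
        (p.2 = .binL σ .hole (.leaf (.inl a)) ∨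
         p.2 = .binR σ (.leaf (.inl a)) .hole)))

/-- `G` with all productions for nullary nonterminals removed. -/
def chainOnly (G : SCFTG N0 N1 T0 T2) : SCFTG N0 N1 T0 T2 where
  start := G.start
  P0 := ∅
  P1 := G.P1
  P0_fin := Set.finite_empty
  P1_fin := G.P1_fin

/-- The spinal trees `I_G(n)` for the nullary nonterminal `n`: one step of `G`
followed by arbitrarily many steps using only unary productions, until no
unary nonterminal remains. -/
def spinalTrees (G : SCFTG N0 N1 T0 T2) (n : N0) : Set (SForm N0 N1 T0 T2) :=
  { t | t.noUnary ∧ ∃ u, G.Step (.leaf (.inl n)) u ∧ G.chainOnly.Derives u t }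

/-- A normalized spine grammar: in normal form, and no spinal tree for a
nullary nonterminal `n` contains `n`. -/
def Normalized (G : SCFTG N0 N1 T0 T2) : Prop :=
  G.InNormalForm ∧ ∀ n : N0, ∀ t ∈ G.spinalTrees n, ¬ t.hasLeaf (Sum.inl n)

end SCFTG


/-! ### Auxiliary machinery for the normalization theorem -/

namespace Ctx3

variable {L U B : Type}

/-- Composition of contexts: plug `c2` into the hole of `c1`. -/
def comp : Ctx3 L U B → Ctx3 L U B → Ctx3 L U B
  | .hole, c2 => c2
  | .un u c, c2 => .un u (c.comp c2)
  | .binL b c t, c2 => .binL b (c.comp c2) t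
  | .binR b t c, c2 => .binR b t (c.comp c2)

@[simp] lemma hole_comp (c : Ctx3 L U B) : Ctx3.comp .hole c = c := rfl

@[simp] lemma comp_hole (c : Ctx3 L U B) : c.comp .hole = c := by
  induction c <;> simp [comp, *]

lemma subst_comp (c1 c2 : Ctx3 L U B) (t : Tree3 L U B) :
    (c1.comp c2).subst t = c1.subst (c2.subst t) := by
  induction c1 <;> simp [comp, Ctx3.subst, *]

lemma comp_ne_hole {c1 : Ctx3 L U B} (h : c1 ≠ .hole) (c2 : Ctx3 L U B) :
    c1.comp c2 ≠ .hole := by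
  cases c1 <;> simp [comp] at h ⊢

lemma spineOk_comp {d : B → Bool} {c1 c2 : Ctx3 L U B}
    (h1 : c1.SpineOk d) (h2 : c2.SpineOk d) : (c1.comp c2).SpineOk d := by
  induction c1 with
  | hole => exact h2
  | un u c ih => exact ih h1
  | binL b c t ih => exact ⟨h1.1, ih h1.2⟩
  | binR b t c ih => exact ⟨h1.1, ih h1.2⟩

/-- Size of a context. -/
def size : Ctx3 L U B → ℕ
  | .hole => 1
  | .un _ c => c.size + 1
  | .binL _ c t => c.size + t.size + 1
  | .binR _ t c => t.size + c.size + 1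

lemma subst_eq_leaf {c : Ctx3 L U B} {x : Tree3 L U B} {l : L}
    (h : c.subst x = Tree3.leaf l) : c = .hole ∧ x = Tree3.leaf l := by
  cases c <;> simp [Ctx3.subst] at h ⊢ <;> exact h

end Ctx3

namespace Tree3

lemma size_pos {L U B : Type} (t : Tree3 L U B) : 1 ≤ t.size := by
  cases t <;> simp [size]

end Tree3

section EvSection

variable {N0 N1 T0 T2 : Type}

/-- Embedding of terminal contexts into sentential contexts. -/
def embedC : Ctx3 T0 Empty T2 → Ctx3 (N0 ⊕ T0) N1 T2
  | .hole => .hole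
  | .un u _ => u.elim
  | .binL b c t => .binL b (embedC c) (SCFTG.embed t)
  | .binR b t c => .binR b (SCFTG.embed t) (embedC c)

lemma embed_subst (C : Ctx3 T0 Empty T2) (t : Tree3 T0 Empty T2) :
    (SCFTG.embed (C.subst t) : SForm N0 N1 T0 T2)
      = (embedC C).subst (SCFTG.embed t) := by
  induction C with
  | hole => rfl
  | un u _ => exact u.elim
  | binL b c s ih =>
    show Tree3.bin b _ _ = Tree3.bin b _ _
    rw [← ih]; rfl
  | binR b s c ih =>
    show Tree3.bin b _ _ = Tree3.bin b _ _
    rw [← ih]; rfl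

lemma embedC_comp (C1 C2 : Ctx3 T0 Empty T2) :
    (embedC (C1.comp C2) : Ctx3 (N0 ⊕ T0) N1 T2)
      = (embedC C1).comp (embedC C2) := by
  induction C1 with
  | hole => rfl
  | un u _ => exact u.elim
  | binL b c s ih => simp [Ctx3.comp, embedC, ih]
  | binR b s c ih => simp [Ctx3.comp, embedC, ih]

/-- Combined big-step evaluation judgment for sentential forms (left) and
contexts (right). -/
inductive EvJ (G : SCFTG N0 N1 T0 T2) :
    (SForm N0 N1 T0 T2 × Tree3 T0 Empty T2) ⊕
      (Ctx3 (N0 ⊕ T0) N1 T2 × Ctx3 T0 Empty T2) → Prop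
  | leafT (α : T0) : EvJ G (.inl (.leaf (.inr α), .leaf α))
  | leafN {n r t} : (n, r) ∈ G.P0 → EvJ G (.inl (r, t)) →
      EvJ G (.inl (.leaf (.inl n), t))
  | bin {σ s1 s2 t1 t2} : EvJ G (.inl (s1, t1)) → EvJ G (.inl (s2, t2)) →
      EvJ G (.inl (.bin σ s1 s2, .bin σ t1 t2))
  | un {b r C s t} : (b, r) ∈ G.P1 → EvJ G (.inr (r, C)) → EvJ G (.inl (s, t)) →
      EvJ G (.inl (.un b s, C.subst t))
  | hole : EvJ G (.inr (.hole, .hole))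
  | cun {b r C c C'} : (b, r) ∈ G.P1 → EvJ G (.inr (r, C)) → EvJ G (.inr (c, C')) →
      EvJ G (.inr (.un b c, C.comp C'))
  | cbinL {σ c C s t} : EvJ G (.inr (c, C)) → EvJ G (.inl (s, t)) →
      EvJ G (.inr (.binL σ c s, .binL σ C t))
  | cbinR {σ s t c C} : EvJ G (.inl (s, t)) → EvJ G (.inr (c, C)) →
      EvJ G (.inr (.binR σ s c, .binR σ t C))

/-- Big-step evaluation of a sentential form to a terminal tree. -/
abbrev Ev (G : SCFTG N0 N1 T0 T2) (s : SForm N0 N1 T0 T2)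
    (t : Tree3 T0 Empty T2) : Prop := EvJ G (.inl (s, t))

/-- Big-step evaluation of a sentential context to a terminal context. -/
abbrev EvCtx (G : SCFTG N0 N1 T0 T2) (c : Ctx3 (N0 ⊕ T0) N1 T2)
    (C : Ctx3 T0 Empty T2) : Prop := EvJ G (.inr (c, C))

variable {G : SCFTG N0 N1 T0 T2}

lemma ev_embed (t : Tree3 T0 Empty T2) : Ev G (SCFTG.embed t) t := by
  induction t with
  | leaf a => exact EvJ.leafT a
  | un u _ => exact u.elim
  | bin b t1 t2 ih1 ih2 => exact EvJ.bin ih1 ih2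

lemma e1fwd : ∀ (C : Ctx3 (N0 ⊕ T0) N1 T2) {s t},
    Ev G (C.subst s) t →
    ∃ TC t', EvCtx G C TC ∧ Ev G s t' ∧ t = TC.subst t' := by
  intro C
  induction C with
  | hole => intro s t h; exact ⟨.hole, t, EvJ.hole, h, rfl⟩
  | un b c ih =>
    intro s t h
    cases h with
    | un hp hC hs =>
      obtain ⟨TC1, t', h1, h2, rfl⟩ := ih hs
      exact ⟨_, t', EvJ.cun hp hC h1, h2, (Ctx3.subst_comp _ _ _).symm⟩
  | binL σ c s2 ih =>
    intro s t h
    cases h with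
    | bin h1 h2 =>
      obtain ⟨TC1, t', hc, hs, rfl⟩ := ih h1
      exact ⟨_, t', EvJ.cbinL hc h2, hs, rfl⟩
  | binR σ s2 c ih =>
    intro s t h
    cases h with
    | bin h1 h2 =>
      obtain ⟨TC1, t', hc, hs, rfl⟩ := ih h2
      exact ⟨_, t', EvJ.cbinR h1 hc, hs, rfl⟩

lemma e1bwd : ∀ (C : Ctx3 (N0 ⊕ T0) N1 T2) {TC s t'},
    EvCtx G C TC → Ev G s t' → Ev G (C.subst s) (TC.subst t') := by
  intro C
  induction C with
  | hole => intro TC s t' hC hs; cases hC; exact hs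
  | un b c ih =>
    intro TC s t' hC hs
    cases hC with
    | cun hp h1 h2 =>
      rw [Ctx3.subst_comp]
      exact EvJ.un hp h1 (ih h2 hs)
  | binL σ c s2 ih =>
    intro TC s t' hC hs
    cases hC with
    | cbinL h1 h2 => exact EvJ.bin (ih h1 hs) h2
  | binR σ s2 c ih =>
    intro TC s t' hC hs
    cases hC with
    | cbinR h1 h2 => exact EvJ.bin h1 (ih h2 hs)

lemma step_back {s s' t} (hstep : G.Step s s') (h : Ev G s' t) : Ev G s t := by
  cases hstep with
  | p0 C n r hp =>
    obtain ⟨TC, t', hC, hr, rfl⟩ := e1fwd C h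
    exact e1bwd C hC (EvJ.leafN hp hr)
  | p1 C n r t'' hp =>
    obtain ⟨TC, t', hC, hr, rfl⟩ := e1fwd C h
    obtain ⟨TC1, t2, hC1, ht2, rfl⟩ := e1fwd r hr
    exact e1bwd C hC (EvJ.un hp hC1 ht2)

lemma derives_ev {s t} (h : G.Derives s (SCFTG.embed t)) : Ev G s t := by
  induction h using Relation.ReflTransGen.head_induction_on with
  | refl => exact ev_embed t
  | head hstep _ ih => exact step_back hstep ih

lemma step_ctx {s s'} (C : Ctx3 (N0 ⊕ T0) N1 T2) (h : G.Step s s') :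
    G.Step (C.subst s) (C.subst s') := by
  cases h with
  | p0 C' n r hp =>
    rw [← Ctx3.subst_comp, ← Ctx3.subst_comp]
    exact SCFTG.Step.p0 _ _ _ hp
  | p1 C' n r t' hp =>
    rw [← Ctx3.subst_comp, ← Ctx3.subst_comp]
    exact SCFTG.Step.p1 _ _ _ _ hp

lemma derives_ctx {s s'} (C : Ctx3 (N0 ⊕ T0) N1 T2) (h : G.Derives s s') :
    G.Derives (C.subst s) (C.subst s') := by
  induction h with
  | refl => exact Relation.ReflTransGen.refl
  | tail _ hstep ih => exact ih.tail (step_ctx C hstep)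

lemma ev_derives : ∀ x, EvJ G x →
    (match x with
     | .inl (s, t) => G.Derives s (SCFTG.embed t)
     | .inr (c, C) => ∀ s', G.Derives (c.subst s') ((embedC C).subst s')) := by
  intro x h
  induction h with
  | leafT α => exact Relation.ReflTransGen.refl
  | leafN hp h ih =>
    rename_i n r t
    have ih' : G.Derives r (SCFTG.embed t) := ih
    exact Relation.ReflTransGen.head (SCFTG.Step.p0 .hole _ _ hp) ih'
  | bin h1 h2 ih1 ih2 =>
    rename_i σ s1 s2 t1 t2
    have ih1' : G.Derives s1 (SCFTG.embed t1) := ih1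
    have ih2' : G.Derives s2 (SCFTG.embed t2) := ih2
    show G.Derives (Tree3.bin σ s1 s2) _
    refine Relation.ReflTransGen.trans
      (derives_ctx (.binL σ .hole s2) ih1') ?_
    exact derives_ctx (.binR σ _ .hole) ih2'
  | un hp hC hs ihC ihs =>
    rename_i b r C s t
    have ihs' : G.Derives s (SCFTG.embed t) := ihs
    have ihC' : ∀ s', G.Derives (r.subst s') ((embedC C).subst s') := ihC
    refine Relation.ReflTransGen.head (SCFTG.Step.p1 .hole _ _ _ hp) ?_
    rw [embed_subst]
    exact Relation.ReflTransGen.trans (derives_ctx r ihs') (ihC' _)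
  | hole => intro s'; exact Relation.ReflTransGen.refl
  | cun hp hC hc ihC ihc =>
    rename_i b r C c C'
    intro s'
    have ihc' : ∀ s', G.Derives (c.subst s') ((embedC C').subst s') := ihc
    have ihC' : ∀ s', G.Derives (r.subst s') ((embedC C).subst s') := ihC
    show G.Derives (Tree3.un b (c.subst s')) _
    have h1 : G.Derives (Tree3.un b (c.subst s'))
        (Tree3.un b ((embedC C').subst s')) :=
      derives_ctx (.un b .hole) (ihc' s')
    refine Relation.ReflTransGen.trans h1 ?_
    refine Relation.ReflTransGen.head (SCFTG.Step.p1 .hole _ _ _ hp) ?_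
    rw [embedC_comp, Ctx3.subst_comp]
    exact ihC' _
  | cbinL hc hs ihc ihs =>
    rename_i σ c C s t
    intro s'
    have ihc' : ∀ s', G.Derives (c.subst s') ((embedC C).subst s') := ihc
    have ihs' : G.Derives s (SCFTG.embed t) := ihs
    show G.Derives (Tree3.bin σ (c.subst s') s) _
    refine Relation.ReflTransGen.trans
      (derives_ctx (.binL σ .hole s) (ihc' s')) ?_
    exact derives_ctx (.binR σ _ .hole) ihs'
  | cbinR hs hc ihs ihc =>
    rename_i σ s t c C
    intro s'
    have ihc' : ∀ s', G.Derives (c.subst s') ((embedC C).subst s') := ihc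
    have ihs' : G.Derives s (SCFTG.embed t) := ihs
    show G.Derives (Tree3.bin σ s (c.subst s')) _
    refine Relation.ReflTransGen.trans
      (derives_ctx (.binR σ s .hole) (ihc' s')) ?_
    exact derives_ctx (.binL σ .hole _) ihs'

lemma derivFrom_eq_ev (G : SCFTG N0 N1 T0 T2) (n : N0) :
    G.derivFrom n = {t | Ev G (.leaf (.inl n)) t} := by
  ext t
  constructor
  · exact fun h => derives_ev h
  · intro h
    exact ev_derives _ h

end EvSection


section Finiteness

variable {L U B : Type}

lemma finite_tree_size_le [Finite L] [Finite U] [Finite B] (k : ℕ) :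
    {t : Tree3 L U B | t.size ≤ k}.Finite := by
  induction k with
  | zero =>
    convert Set.finite_empty
    ext t
    simp only [Set.mem_setOf_eq, Set.mem_empty_iff_false, iff_false, not_le]
    exact t.size_pos
  | succ k ih =>
    refine Set.Finite.subset (Set.Finite.union
      (Set.Finite.union (Set.finite_range (Tree3.leaf : L → Tree3 L U B))
        (((Set.finite_univ (α := U)).prod ih).image
          (fun p => Tree3.un p.1 p.2)))
      (((Set.finite_univ (α := B)).prod (ih.prod ih)).image
        (fun p => Tree3.bin p.1 p.2.1 p.2.2))) ?_
    intro t ht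
    simp only [Set.mem_setOf_eq] at ht
    cases t with
    | leaf a => exact Or.inl (Or.inl ⟨a, rfl⟩)
    | un u t' =>
      refine Or.inl (Or.inr ⟨(u, t'), ⟨trivial, ?_⟩, rfl⟩)
      simp only [Tree3.size] at ht
      simpa using Nat.le_of_succ_le_succ ht
    | bin b t1 t2 =>
      have h1 := t1.size_pos
      have h2 := t2.size_pos
      simp only [Tree3.size] at ht
      exact Or.inr ⟨(b, t1, t2), ⟨trivial, by simp; omega, by simp; omega⟩, rfl⟩

lemma finite_ctx_size_le [Finite L] [Finite U] [Finite B] (k : ℕ) :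
    {c : Ctx3 L U B | c.size ≤ k}.Finite := by
  induction k with
  | zero =>
    convert Set.finite_empty
    ext c
    simp only [Set.mem_setOf_eq, Set.mem_empty_iff_false, iff_false, not_le]
    cases c <;> simp [Ctx3.size] <;> omega
  | succ k ih =>
    have htree := finite_tree_size_le (L := L) (U := U) (B := B) k
    refine Set.Finite.subset (Set.Finite.union (Set.Finite.union
      (Set.Finite.union (Set.finite_singleton (Ctx3.hole : Ctx3 L U B))
        (((Set.finite_univ (α := U)).prod ih).image (fun p => Ctx3.un p.1 p.2)))
      (((Set.finite_univ (α := B)).prod (ih.prod htree)).image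
        (fun p => Ctx3.binL p.1 p.2.1 p.2.2)))
      (((Set.finite_univ (α := B)).prod (htree.prod ih)).image
        (fun p => Ctx3.binR p.1 p.2.1 p.2.2))) ?_
    intro c hc
    simp only [Set.mem_setOf_eq] at hc
    cases c with
    | hole => exact Or.inl (Or.inl (Or.inl rfl))
    | un u c' =>
      refine Or.inl (Or.inl (Or.inr ⟨(u, c'), ⟨trivial, ?_⟩, rfl⟩))
      simp only [Ctx3.size] at hc
      simpa using Nat.le_of_succ_le_succ hc
    | binL b c' t =>
      have h2 := t.size_pos
      have h1 : 1 ≤ c'.size := by cases c' <;> simp [Ctx3.size] <;> omega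
      simp only [Ctx3.size] at hc
      exact Or.inl (Or.inr ⟨(b, c', t), ⟨trivial, by simp; omega, by simp; omega⟩, rfl⟩)
    | binR b t c' =>
      have h2 := t.size_pos
      have h1 : 1 ≤ c'.size := by cases c' <;> simp [Ctx3.size] <;> omega
      simp only [Ctx3.size] at hc
      exact Or.inr ⟨(b, t, c'), ⟨trivial, by simp; omega, by simp; omega⟩, rfl⟩

end Finiteness

section SpineLemmas

variable {T0 T2 : Type} {d : T2 → Bool}

/-- Every terminal tree is either a leaf or decomposes along the `d`-spine. -/
lemma exists_spine_decomp (d : T2 → Bool) (t : Tree3 T0 Empty T2) :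
    (∃ α, t = .leaf α) ∨
    (∃ (C : Ctx3 T0 Empty T2) (α : T0),
      C.SpineOk d ∧ C ≠ .hole ∧ C.subst (.leaf α) = t) := by
  induction t with
  | leaf a => exact Or.inl ⟨a, rfl⟩
  | un u _ => exact u.elim
  | bin σ t1 t2 ih1 ih2 =>
    cases hσ : d σ with
    | false =>
      refine Or.inr ?_
      rcases ih1 with ⟨α, rfl⟩ | ⟨C, α, hok, hne, rfl⟩
      · exact ⟨.binL σ .hole t2, α, ⟨hσ, trivial⟩, by simp, rfl⟩
      · exact ⟨.binL σ C t2, α, ⟨hσ, hok⟩, by simp, rfl⟩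
    | true =>
      refine Or.inr ?_
      rcases ih2 with ⟨α, rfl⟩ | ⟨C, α, hok, hne, rfl⟩
      · exact ⟨.binR σ t1 .hole, α, ⟨hσ, trivial⟩, by simp, rfl⟩
      · exact ⟨.binR σ t1 C, α, ⟨hσ, hok⟩, by simp, rfl⟩

/-- Two spine-compatible decompositions of the same tree are comparable. -/
lemma spine_factor : ∀ (CC : Ctx3 T0 Empty T2) {C0 : Ctx3 T0 Empty T2}
    {α : T0} {t0 : Tree3 T0 Empty T2},
    CC.SpineOk d → C0.SpineOk d → C0.subst (.leaf α) = CC.subst t0 →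
    ∃ c0, C0 = CC.comp c0 ∧ c0.subst (.leaf α) = t0 ∧ c0.SpineOk d := by
  intro CC
  induction CC with
  | hole => intro C0 α t0 _ hok heq; exact ⟨C0, rfl, heq, hok⟩
  | un u _ => exact u.elim
  | binL σ c t2 ih =>
    intro C0 α t0 hCC hok heq
    cases C0 with
    | hole => simp [Ctx3.subst] at heq
    | un u _ => exact u.elim
    | binL σ' c' t2' =>
      simp only [Ctx3.subst, Tree3.bin.injEq] at heq
      obtain ⟨rfl, h1, rfl⟩ := heq
      obtain ⟨c0, rfl, h3, h4⟩ := ih hCC.2 hok.2 h1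
      exact ⟨c0, rfl, h3, h4⟩
    | binR σ' t1' c' =>
      simp only [Ctx3.subst, Tree3.bin.injEq] at heq
      obtain ⟨rfl, -, -⟩ := heq
      exact absurd hCC.1 (by simp [hok.1])
  | binR σ t1 c ih =>
    intro C0 α t0 hCC hok heq
    cases C0 with
    | hole => simp [Ctx3.subst] at heq
    | un u _ => exact u.elim
    | binR σ' t1' c' =>
      simp only [Ctx3.subst, Tree3.bin.injEq] at heq
      obtain ⟨rfl, rfl, h1⟩ := heq
      obtain ⟨c0, rfl, h3, h4⟩ := ih hCC.2 hok.2 h1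
      exact ⟨c0, rfl, h3, h4⟩
    | binL σ' c' t2' =>
      simp only [Ctx3.subst, Tree3.bin.injEq] at heq
      obtain ⟨rfl, -, -⟩ := heq
      exact absurd hCC.1 (by simp [hok.1])

end SpineLemmas

section EvSpine

variable {N0 N1 T0 T2 : Type} {G : SCFTG N0 N1 T0 T2} {d : T2 → Bool}

lemma evctx_spineOk (hd : G.IsSpine d) : ∀ x, EvJ G x →
    (match x with
     | .inl _ => True
     | .inr (c, C) => c.SpineOk d → C.SpineOk d) := by
  intro x h
  induction h with
  | leafT α => trivial
  | leafN _ _ _ => trivial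
  | bin _ _ _ _ => trivial
  | un _ _ _ _ _ => trivial
  | hole => intro _; trivial
  | cun hp hC hc ihC ihc =>
    intro hok
    exact Ctx3.spineOk_comp (ihC (hd _ hp)) (ihc hok)
  | cbinL hc hs ihc ihs =>
    intro hok
    exact ⟨hok.1, ihc hok.2⟩
  | cbinR hs hc ihs ihc =>
    intro hok
    exact ⟨hok.1, ihc hok.2⟩

end EvSpine


namespace SGN

variable {N0 N1 T0 T2 : Type}

/-- Bound on sizes of right-hand sides. -/
noncomputable def KK (G : SCFTG N0 N1 T0 T2) : ℕ :=
  (G.P0_fin.toFinset.sup fun p => p.2.size) ⊔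
    ((G.P1_fin.toFinset.sup fun p => p.2.size) ⊔ 1)

lemma one_le_KK (G : SCFTG N0 N1 T0 T2) : 1 ≤ KK G :=
  le_sup_of_le_right le_sup_right

lemma bound0 {G : SCFTG N0 N1 T0 T2} {n r} (h : (n, r) ∈ G.P0) :
    r.size ≤ KK G :=
  le_sup_of_le_left (Finset.le_sup (f := fun p => p.2.size)
    ((G.P0_fin.mem_toFinset).2 h))

lemma bound1 {G : SCFTG N0 N1 T0 T2} {b r} (h : (b, r) ∈ G.P1) :
    r.size ≤ KK G :=
  le_sup_of_le_right (le_sup_of_le_left (Finset.le_sup (f := fun p => p.2.size)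
    ((G.P1_fin.mem_toFinset).2 h)))

/-- Size-bounded sentential forms. -/
def SubT (G : SCFTG N0 N1 T0 T2) : Type :=
  {s : SForm N0 N1 T0 T2 | s.size ≤ KK G}

/-- Size-bounded sentential contexts. -/
def SubC (G : SCFTG N0 N1 T0 T2) : Type :=
  {c : Ctx3 (N0 ⊕ T0) N1 T2 | c.size ≤ KK G}

noncomputable instance (G : SCFTG N0 N1 T0 T2)
    [Finite N0] [Finite N1] [Finite T0] [Finite T2] : Fintype (SubT G) :=
  (finite_tree_size_le (KK G)).fintype

instance (G : SCFTG N0 N1 T0 T2)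
    [Finite N0] [Finite N1] [Finite T0] [Finite T2] : Finite (SubT G) :=
  Set.Finite.to_subtype (finite_tree_size_le (KK G))

instance (G : SCFTG N0 N1 T0 T2)
    [Finite N0] [Finite N1] [Finite T0] [Finite T2] : Finite (SubC G) :=
  Set.Finite.to_subtype (finite_ctx_size_le (KK G))

noncomputable instance (G : SCFTG N0 N1 T0 T2)
    [Finite N0] [Finite N1] [Finite T0] [Finite T2] : Fintype (SubC G) :=
  (finite_ctx_size_le (KK G)).fintype

/-- New nullary nonterminals. -/
def NN0 (G : SCFTG N0 N1 T0 T2) : Type := Option (SubT G × Bool)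

/-- New unary nonterminals. -/
def NN1 (G : SCFTG N0 N1 T0 T2) : Type :=
  ((T2 × SubT G) ⊕ ((SubT G × T0) ⊕ SubC G)) × Bool

instance (G : SCFTG N0 N1 T0 T2)
    [Finite N0] [Finite N1] [Finite T0] [Finite T2] : Finite (NN0 G) := by
  unfold NN0; infer_instance

instance (G : SCFTG N0 N1 T0 T2)
    [Finite N0] [Finite N1] [Finite T0] [Finite T2] : Finite (NN1 G) := by
  unfold NN1; infer_instance

noncomputable instance (G : SCFTG N0 N1 T0 T2)
    [Fintype N0] [Fintype N1] [Fintype T0] [Fintype T2] : Fintype (NN0 G) := by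
  unfold NN0; infer_instance

noncomputable instance (G : SCFTG N0 N1 T0 T2)
    [Fintype N0] [Fintype N1] [Fintype T0] [Fintype T2] : Fintype (NN1 G) := by
  unfold NN1; infer_instance

variable (G : SCFTG N0 N1 T0 T2) (d : T2 → Bool)

/-- Atomic spine-step symbols. -/
def asym (σ : T2) (s : SubT G) (p : Bool) : NN1 G := (.inl (σ, s), p)

/-- Form-spine symbols. -/
def fsym (s : SubT G) (α : T0) (p : Bool) : NN1 G := (.inr (.inl (s, α)), p)

/-- Context-spine symbols. -/
def csym (c : SubC G) (p : Bool) : NN1 G := (.inr (.inr c), p)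

def par : NN0 G → Bool
  | none => true
  | some (_, p) => p

noncomputable def src : NN0 G → SubT G
  | none => ⟨.leaf (.inl G.start), one_le_KK G⟩
  | some (s, _) => s

/-- Target semantics of nullary symbols. -/
noncomputable def target0 (a : NN0 G) : Set (Tree3 T0 Empty T2) :=
  {t | Ev G (src G a).1 t}

/-- Target semantics of unary symbols. -/
def target1 (b : NN1 G) : Set (Ctx3 T0 Empty T2) :=
  match b.1 with
  | .inl (σ, s2) =>
      {C | ∃ t2, Ev G s2.1 t2 ∧
        C = if d σ then .binR σ t2 .hole else .binL σ .hole t2}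
  | .inr (.inl (s, α)) => {C | C ≠ .hole ∧ Ev G s.1 (C.subst (.leaf α))}
  | .inr (.inr c) => {C | C ≠ .hole ∧ EvCtx G c.1 C}

/-- Nullary productions of the normalized grammar. -/
noncomputable def P0' : Set (NN0 G × SForm (NN0 G) (NN1 G) T0 T2) :=
  {p | (∃ α, p.2 = .leaf (.inr α) ∧ Ev G (src G p.1).1 (.leaf α)) ∨
       (∃ α, p.2 = .un (fsym G (src G p.1) α (!par G p.1)) (.leaf (.inr α)))}

/-- Unary productions of the normalized grammar. -/
def P1' : Set (NN1 G × Ctx3 (NN0 G ⊕ T0) (NN1 G) T2) :=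
  {p | (∃ k1 k2 : (T2 × SubT G) ⊕ ((SubT G × T0) ⊕ SubC G),
          p.2 = .un (k1, p.1.2) (.un (k2, p.1.2) .hole) ∧
          ∀ C1 ∈ target1 G d (k1, p.1.2), ∀ C2 ∈ target1 G d (k2, p.1.2),
            C1.comp C2 ∈ target1 G d p.1) ∨
       (∃ σ s2, d σ = false ∧
          p.2 = .binL σ .hole (.leaf (.inl (some (s2, p.1.2)))) ∧
          ∀ t2, Ev G s2.1 t2 → Ctx3.binL σ Ctx3.hole t2 ∈ target1 G d p.1) ∨
       (∃ σ s2, d σ = true ∧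
          p.2 = .binR σ (.leaf (.inl (some (s2, p.1.2)))) .hole ∧
          ∀ t2, Ev G s2.1 t2 → Ctx3.binR σ t2 Ctx3.hole ∈ target1 G d p.1)}

lemma P0'_finite [Finite N0] [Finite N1] [Finite T0] [Finite T2] :
    (P0' G).Finite := by
  refine Set.Finite.subset (Set.Finite.prod (Set.finite_univ (α := NN0 G))
    (Set.Finite.union
      ((Set.finite_univ (α := T0)).image
        (fun α => (Tree3.leaf (Sum.inr α) : SForm (NN0 G) (NN1 G) T0 T2)))
      ((Set.finite_univ (α := NN1 G × T0)).image
        (fun q => (Tree3.un q.1 (.leaf (.inr q.2))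
          : SForm (NN0 G) (NN1 G) T0 T2))))) ?_
  rintro ⟨a, r⟩ (⟨α, h2, -⟩ | ⟨α, h2⟩)
  · exact ⟨trivial, Or.inl ⟨α, trivial, h2.symm⟩⟩
  · exact ⟨trivial, Or.inr ⟨(fsym G (src G a) α (!par G a), α), trivial, h2.symm⟩⟩

lemma P1'_finite [Finite N0] [Finite N1] [Finite T0] [Finite T2] :
    (P1' G d).Finite := by
  refine Set.Finite.subset (Set.Finite.prod (Set.finite_univ (α := NN1 G))
    (Set.Finite.union (Set.Finite.union
      ((Set.finite_univ (α := NN1 G × NN1 G)).image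
        (fun q => (Ctx3.un q.1 (.un q.2 .hole)
          : Ctx3 (NN0 G ⊕ T0) (NN1 G) T2)))
      ((Set.finite_univ (α := T2 × NN0 G)).image
        (fun q => (Ctx3.binL q.1 .hole (.leaf (.inl q.2))
          : Ctx3 (NN0 G ⊕ T0) (NN1 G) T2))))
      ((Set.finite_univ (α := T2 × NN0 G)).image
        (fun q => (Ctx3.binR q.1 (.leaf (.inl q.2)) .hole
          : Ctx3 (NN0 G ⊕ T0) (NN1 G) T2))))) ?_
  rintro ⟨b, r⟩ (⟨k1, k2, h2, -⟩ | ⟨σ, s2, -, h2, -⟩ | ⟨σ, s2, -, h2, -⟩)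
  · exact ⟨trivial, Or.inl (Or.inl ⟨((k1, b.2), (k2, b.2)), trivial, h2.symm⟩)⟩
  · exact ⟨trivial, Or.inl (Or.inr ⟨(σ, some (s2, b.2)), trivial, h2.symm⟩)⟩
  · exact ⟨trivial, Or.inr ⟨(σ, some (s2, b.2)), trivial, h2.symm⟩⟩

/-- The normalized grammar. -/
noncomputable def G' [Finite N0] [Finite N1] [Finite T0] [Finite T2] :
    SCFTG (NN0 G) (NN1 G) T0 T2 where
  start := none
  P0 := P0' G
  P1 := P1' G d
  P0_fin := P0'_finite G
  P1_fin := P1'_finite G d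

end SGN


namespace SGN

section Main

variable {N0 N1 T0 T2 : Type} [Fintype N0] [Fintype N1] [Fintype T0] [Fintype T2]
variable (G : SCFTG N0 N1 T0 T2) (d : T2 → Bool)

/-- Interpretation of sentential forms of the new grammar via target semantics. -/
noncomputable def Interp : SForm (NN0 G) (NN1 G) T0 T2 → Set (Tree3 T0 Empty T2)
  | .leaf (.inl a) => target0 G a
  | .leaf (.inr α) => {.leaf α}
  | .un b s => {t | ∃ C t0, C ∈ target1 G d b ∧ t0 ∈ Interp s ∧ t = C.subst t0}
  | .bin σ s1 s2 =>
      {t | ∃ t1 t2, t1 ∈ Interp s1 ∧ t2 ∈ Interp s2 ∧ t = .bin σ t1 t2}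

noncomputable def InterpC : Ctx3 (NN0 G ⊕ T0) (NN1 G) T2 → Set (Ctx3 T0 Empty T2)
  | .hole => {.hole}
  | .un b c =>
      {C | ∃ C1 C2, C1 ∈ target1 G d b ∧ C2 ∈ InterpC c ∧ C = C1.comp C2}
  | .binL σ c s =>
      {C | ∃ C1 t, C1 ∈ InterpC c ∧ t ∈ Interp G d s ∧ C = .binL σ C1 t}
  | .binR σ s c =>
      {C | ∃ t C1, t ∈ Interp G d s ∧ C1 ∈ InterpC c ∧ C = .binR σ t C1}

lemma prodSound {b r} (h : (b, r) ∈ P1' G d) :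
    InterpC G d r ⊆ target1 G d b := by
  obtain ⟨k, q⟩ := b
  intro C hC
  rcases h with ⟨k1, k2, he, cond⟩ | ⟨σ, s2, hσ, he, cond⟩ | ⟨σ, s2, hσ, he, cond⟩
  · have he' : r = Ctx3.un (k1, q) (Ctx3.un (k2, q) Ctx3.hole) := he
    rw [he'] at hC
    obtain ⟨C1, C2, hC1, ⟨C2', C2'', hC2', hC2'', rfl⟩, rfl⟩ := hC
    obtain rfl : C2'' = Ctx3.hole := hC2''
    rw [Ctx3.comp_hole]
    exact cond C1 hC1 C2' hC2'
  · have he' : r = Ctx3.binL σ Ctx3.hole (.leaf (.inl (some (s2, q)))) := he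
    rw [he'] at hC
    obtain ⟨C1, t, hC1, ht, rfl⟩ := hC
    obtain rfl : C1 = Ctx3.hole := hC1
    exact cond t ht
  · have he' : r = Ctx3.binR σ (.leaf (.inl (some (s2, q)))) Ctx3.hole := he
    rw [he'] at hC
    obtain ⟨t, C1, ht, hC1, rfl⟩ := hC
    obtain rfl : C1 = Ctx3.hole := hC1
    exact cond t ht

lemma soundness : ∀ x, EvJ (G' G d) x →
    (match x with
     | .inl (s, t) => t ∈ Interp G d s
     | .inr (c, C) => C ∈ InterpC G d c) := by
  intro x h
  induction h with
  | leafT α => exact rfl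
  | leafN hp h ih =>
    rename_i a r t
    have ih' : t ∈ Interp G d r := ih
    rcases hp with ⟨α, he, hEv⟩ | ⟨α, he⟩
    · have he' : r = Tree3.leaf (Sum.inr α) := he
      rw [he'] at ih'
      obtain rfl : t = Tree3.leaf α := ih'
      exact hEv
    · have he' : r = Tree3.un (fsym G (src G a) α (!par G a))
          (Tree3.leaf (Sum.inr α)) := he
      rw [he'] at ih'
      obtain ⟨C, t0, hC, ht0, rfl⟩ := ih'
      obtain rfl : t0 = Tree3.leaf α := ht0
      exact hC.2
  | bin h1 h2 ih1 ih2 => exact ⟨_, _, ih1, ih2, rfl⟩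
  | un hp hC hs ihC ihs =>
    exact ⟨_, _, prodSound G d hp ihC, ihs, rfl⟩
  | hole => exact rfl
  | cun hp hC hc ihC ihc =>
    exact ⟨_, _, prodSound G d hp ihC, ihc, rfl⟩
  | cbinL hc hs ihc ihs => exact ⟨_, _, ihc, ihs, rfl⟩
  | cbinR hs hc ihs ihc => exact ⟨_, _, ihs, ihc, rfl⟩

/-- Derivability of a terminal context from a unary symbol of `G'`. -/
def DenU (b : NN1 G) (C : Ctx3 T0 Empty T2) : Prop :=
  ∃ r, (b, r) ∈ P1' G d ∧ EvCtx (G' G d) r C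

lemma denU_mono {k k' : (T2 × SubT G) ⊕ ((SubT G × T0) ⊕ SubC G)} {q : Bool}
    (hsub : target1 G d (k, q) ⊆ target1 G d (k', q)) {C}
    (h : DenU G d (k, q) C) : DenU G d (k', q) C := by
  obtain ⟨r, hr, hE⟩ := h
  refine ⟨r, ?_, hE⟩
  rcases hr with ⟨k1, k2, he, cond⟩ | ⟨σ, s2, hσ, he, cond⟩ | ⟨σ, s2, hσ, he, cond⟩
  · exact Or.inl ⟨k1, k2, he, fun C1 h1 C2 h2 => hsub (cond C1 h1 C2 h2)⟩
  · exact Or.inr (Or.inl ⟨σ, s2, hσ, he, fun t2 h2 => hsub (cond t2 h2)⟩)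
  · exact Or.inr (Or.inr ⟨σ, s2, hσ, he, fun t2 h2 => hsub (cond t2 h2)⟩)

/-- From spine derivability to derivability of the tree from a nullary symbol. -/
lemma apart (a : NN0 G) {t} (hEv : Ev G (src G a).1 t)
    (hB : ∀ p α (C : Ctx3 T0 Empty T2), C.SpineOk d → C ≠ .hole →
      C.subst (.leaf α) = t → DenU G d (fsym G (src G a) α p) C) :
    Ev (G' G d) (.leaf (.inl a)) t := by
  rcases exists_spine_decomp d t with ⟨α, rfl⟩ | ⟨C, α, hok, hne, heq⟩
  · have hp0 : (a, (.leaf (.inr α) : SForm (NN0 G) (NN1 G) T0 T2)) ∈ P0' G :=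
      Or.inl ⟨α, rfl, hEv⟩
    exact EvJ.leafN hp0 (EvJ.leafT α)
  · obtain ⟨r, hr, hrC⟩ := hB (!par G a) α C hok hne heq
    have hp0 : (a, (.un (fsym G (src G a) α (!par G a)) (.leaf (.inr α))
        : SForm (NN0 G) (NN1 G) T0 T2)) ∈ P0' G := Or.inr ⟨α, rfl⟩
    have h2 : Ev (G' G d) (.un (fsym G (src G a) α (!par G a)) (.leaf (.inr α)))
        (C.subst (.leaf α)) := EvJ.un hr hrC (EvJ.leafT α)
    rw [heq] at h2
    exact EvJ.leafN hp0 h2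

lemma completeness (hd : G.IsSpine d) : ∀ x, EvJ G x →
    (match x with
     | .inl (s, t) => ∀ (hs : s.size ≤ KK G) (p : Bool) (α : T0)
        (C : Ctx3 T0 Empty T2), C.SpineOk d → C ≠ .hole →
        C.subst (.leaf α) = t → DenU G d (fsym G ⟨s, hs⟩ α p) C
     | .inr (c, C) => ∀ (hc : c.size ≤ KK G), c.SpineOk d → C ≠ .hole →
        ∀ p, DenU G d (csym G ⟨c, hc⟩ p) C) := by
  intro x h
  induction h with
  | leafT α =>
    intro hs p α' C hok hne heq
    exact absurd (Ctx3.subst_eq_leaf heq).1 hne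
  | leafN hp h ih =>
    rename_i n r t
    intro hs p α C hok hne heq
    have hrs : r.size ≤ KK G := bound0 hp
    have hDen : DenU G d (fsym G ⟨r, hrs⟩ α p) C := ih hrs p α C hok hne heq
    refine denU_mono G d ?_ hDen
    rintro C' ⟨h1, h2⟩
    exact ⟨h1, EvJ.leafN hp h2⟩
  | bin h1 h2 ih1 ih2 =>
    rename_i σ s1 s2 t1 t2
    intro hs p α C hok hne heq
    have hs1 : s1.size ≤ KK G := by
      have := s2.size_pos; simp only [Tree3.size] at hs; omega
    have hs2 : s2.size ≤ KK G := by
      have := s1.size_pos; simp only [Tree3.size] at hs; omega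
    have ih2' : ∀ (h : s2.size ≤ KK G) p α C, Ctx3.SpineOk d C → C ≠ .hole →
        C.subst (.leaf α) = t2 → DenU G d (fsym G ⟨s2, h⟩ α p) C := ih2
    have ih1' : ∀ (h : s1.size ≤ KK G) p α C, Ctx3.SpineOk d C → C ≠ .hole →
        C.subst (.leaf α) = t1 → DenU G d (fsym G ⟨s1, h⟩ α p) C := ih1
    have h1' : Ev G s1 t1 := h1
    have h2' : Ev G s2 t2 := h2
    cases C with
    | hole => exact absurd rfl hne
    | un u _ => exact u.elim
    | binL σ' c t2' =>
      simp only [Ctx3.subst, Tree3.bin.injEq] at heq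
      obtain ⟨rfl, hceq, rfl⟩ := heq
      obtain ⟨hσ', hcok⟩ := hok
      -- Ev G' for the off-spine nonterminal
      have hA : Ev (G' G d) (.leaf (.inl (some (⟨s2, hs2⟩, p)))) t2' := by
        refine apart G d (some (⟨s2, hs2⟩, p)) h2' ?_
        intro p' α' C' a1 a2 a3
        exact ih2' hs2 p' α' C' a1 a2 a3
      by_cases hc : c = Ctx3.hole
      · subst hc
        obtain rfl : t1 = Tree3.leaf α := hceq.symm
        refine ⟨.binL σ' .hole (.leaf (.inl (some (⟨s2, hs2⟩, p)))),
          Or.inr (Or.inl ⟨σ', ⟨s2, hs2⟩, hσ', rfl, ?_⟩), ?_⟩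
        · intro t2'' hEv2
          exact ⟨by simp, EvJ.bin h1' hEv2⟩
        · exact EvJ.cbinL EvJ.hole hA
      · obtain ⟨r2, hr2, hE2⟩ := ih1' hs1 p α c hcok hc hceq
        have apr : ((asym G σ' ⟨s2, hs2⟩ p),
            (.binL σ' .hole (.leaf (.inl (some (⟨s2, hs2⟩, p))))
              : Ctx3 (NN0 G ⊕ T0) (NN1 G) T2)) ∈ P1' G d := by
          refine Or.inr (Or.inl ⟨σ', ⟨s2, hs2⟩, hσ', rfl, ?_⟩)
          intro t2'' hEv2
          exact ⟨t2'', hEv2, by simp [hσ']⟩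
        have chainpr : ((fsym G ⟨.bin σ' s1 s2, hs⟩ α p),
            (.un (asym G σ' ⟨s2, hs2⟩ p) (.un (fsym G ⟨s1, hs1⟩ α p) .hole)
              : Ctx3 (NN0 G ⊕ T0) (NN1 G) T2)) ∈ P1' G d := by
          refine Or.inl ⟨.inl (σ', ⟨s2, hs2⟩), .inr (.inl (⟨s1, hs1⟩, α)), rfl, ?_⟩
          rintro C1 ⟨t2'', hEv2, hC1e⟩ C2 ⟨hne2, hEv1⟩
          rw [hσ'] at hC1e
          subst hC1e
          refine ⟨by simp [Ctx3.comp], ?_⟩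
          show Ev G _ ((Ctx3.binL σ' C2 t2'').subst (.leaf α))
          exact EvJ.bin hEv1 hEv2
        refine ⟨_, chainpr, ?_⟩
        have outer := EvJ.cun apr (EvJ.cbinL EvJ.hole hA)
          (EvJ.cun hr2 hE2 EvJ.hole)
        rw [Ctx3.comp_hole] at outer
        exact outer
    | binR σ' t1' c =>
      simp only [Ctx3.subst, Tree3.bin.injEq] at heq
      obtain ⟨rfl, rfl, hceq⟩ := heq
      obtain ⟨hσ', hcok⟩ := hok
      have hA : Ev (G' G d) (.leaf (.inl (some (⟨s1, hs1⟩, p)))) t1' := by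
        refine apart G d (some (⟨s1, hs1⟩, p)) h1' ?_
        intro p' α' C' a1 a2 a3
        exact ih1' hs1 p' α' C' a1 a2 a3
      by_cases hc : c = Ctx3.hole
      · subst hc
        obtain rfl : t2 = Tree3.leaf α := hceq.symm
        refine ⟨.binR σ' (.leaf (.inl (some (⟨s1, hs1⟩, p)))) .hole,
          Or.inr (Or.inr ⟨σ', ⟨s1, hs1⟩, hσ', rfl, ?_⟩), ?_⟩
        · intro t1'' hEv1
          exact ⟨by simp, EvJ.bin hEv1 h2'⟩
        · exact EvJ.cbinR hA EvJ.hole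
      · obtain ⟨r2, hr2, hE2⟩ := ih2' hs2 p α c hcok hc hceq
        have apr : ((asym G σ' ⟨s1, hs1⟩ p),
            (.binR σ' (.leaf (.inl (some (⟨s1, hs1⟩, p)))) .hole
              : Ctx3 (NN0 G ⊕ T0) (NN1 G) T2)) ∈ P1' G d := by
          refine Or.inr (Or.inr ⟨σ', ⟨s1, hs1⟩, hσ', rfl, ?_⟩)
          intro t1'' hEv1
          exact ⟨t1'', hEv1, by simp [hσ']⟩
        have chainpr : ((fsym G ⟨.bin σ' s1 s2, hs⟩ α p),
            (.un (asym G σ' ⟨s1, hs1⟩ p) (.un (fsym G ⟨s2, hs2⟩ α p) .hole)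
              : Ctx3 (NN0 G ⊕ T0) (NN1 G) T2)) ∈ P1' G d := by
          refine Or.inl ⟨.inl (σ', ⟨s1, hs1⟩), .inr (.inl (⟨s2, hs2⟩, α)), rfl, ?_⟩
          rintro C1 ⟨t1'', hEv1, hC1e⟩ C2 ⟨hne2, hEv2⟩
          rw [hσ'] at hC1e
          subst hC1e
          refine ⟨by simp [Ctx3.comp], ?_⟩
          show Ev G _ ((Ctx3.binR σ' t1'' C2).subst (.leaf α))
          exact EvJ.bin hEv1 hEv2
        refine ⟨_, chainpr, ?_⟩
        have outer := EvJ.cun apr (EvJ.cbinR hA EvJ.hole)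
          (EvJ.cun hr2 hE2 EvJ.hole)
        rw [Ctx3.comp_hole] at outer
        exact outer
  | un hp hC h0 ihC ih0 =>
    rename_i b r CC s0 t0
    intro hs p α C hok hne heq
    have hs0 : s0.size ≤ KK G := by simp only [Tree3.size] at hs; omega
    have hrs : r.size ≤ KK G := bound1 hp
    have hrok : r.SpineOk d := hd _ hp
    have hCCok : CC.SpineOk d := evctx_spineOk hd _ hC hrok
    have hC' : EvCtx G r CC := hC
    have h0' : Ev G s0 t0 := h0
    have ihC' : ∀ (h : r.size ≤ KK G), r.SpineOk d → CC ≠ .hole →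
        ∀ p, DenU G d (csym G ⟨r, h⟩ p) CC := ihC
    have ih0' : ∀ (h : s0.size ≤ KK G) p α C, Ctx3.SpineOk d C → C ≠ .hole →
        C.subst (.leaf α) = t0 → DenU G d (fsym G ⟨s0, h⟩ α p) C := ih0
    obtain ⟨c0, rfl, hc0sub, hc0ok⟩ := spine_factor CC hCCok hok heq
    by_cases hc0 : c0 = Ctx3.hole
    · subst hc0
      obtain rfl : t0 = Tree3.leaf α := hc0sub.symm
      rw [Ctx3.comp_hole] at hne ⊢
      have hDen := ihC' hrs hrok hne p
      refine denU_mono G d ?_ hDen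
      rintro C' ⟨g1, g2⟩
      exact ⟨g1, EvJ.un hp g2 h0'⟩
    · by_cases hCC : CC = Ctx3.hole
      · subst hCC
        have hDen := ih0' hs0 p α c0 hc0ok hc0 hc0sub
        refine denU_mono G d ?_ hDen
        rintro C' ⟨g1, g2⟩
        refine ⟨g1, ?_⟩
        exact EvJ.un (C := Ctx3.hole) hp hC' g2
      · have chainpr : ((fsym G ⟨.un b s0, hs⟩ α p),
            (.un (csym G ⟨r, hrs⟩ p) (.un (fsym G ⟨s0, hs0⟩ α p) .hole)
              : Ctx3 (NN0 G ⊕ T0) (NN1 G) T2)) ∈ P1' G d := by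
          refine Or.inl ⟨.inr (.inr ⟨r, hrs⟩), .inr (.inl (⟨s0, hs0⟩, α)), rfl, ?_⟩
          rintro C1 ⟨g1, gE1⟩ C2 ⟨g2, gE2⟩
          refine ⟨Ctx3.comp_ne_hole g1 _, ?_⟩
          rw [Ctx3.subst_comp]
          exact EvJ.un hp gE1 gE2
        obtain ⟨r1, hr1, hE1⟩ := ihC' hrs hrok hCC p
        obtain ⟨r2, hr2, hE2⟩ := ih0' hs0 p α c0 hc0ok hc0 hc0sub
        refine ⟨_, chainpr, ?_⟩
        have outer := EvJ.cun hr1 hE1 (EvJ.cun hr2 hE2 EvJ.hole)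
        rw [Ctx3.comp_hole] at outer
        exact outer
  | hole =>
    intro hc hok hne p
    exact absurd rfl hne
  | cun hp hC1 hC2 ihC1 ihC2 =>
    rename_i b' r'' C1 c' C2
    intro hc hok hne p
    have hc' : c'.size ≤ KK G := by simp only [Ctx3.size] at hc; omega
    have hrs : r''.size ≤ KK G := bound1 hp
    have hrok : r''.SpineOk d := hd _ hp
    have hok' : c'.SpineOk d := hok
    have hC1' : EvCtx G r'' C1 := hC1
    have hC2' : EvCtx G c' C2 := hC2
    have ihC1' : ∀ (h : r''.size ≤ KK G), r''.SpineOk d → C1 ≠ .hole →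
        ∀ p, DenU G d (csym G ⟨r'', h⟩ p) C1 := ihC1
    have ihC2' : ∀ (h : c'.size ≤ KK G), c'.SpineOk d → C2 ≠ .hole →
        ∀ p, DenU G d (csym G ⟨c', h⟩ p) C2 := ihC2
    by_cases h1 : C1 = Ctx3.hole
    · subst h1
      have hne2 : C2 ≠ Ctx3.hole := hne
      have hDen := ihC2' hc' hok' hne2 p
      refine denU_mono G d ?_ hDen
      rintro C' ⟨g1, g2⟩
      exact ⟨g1, EvJ.cun hp hC1' g2⟩
    · by_cases h2 : C2 = Ctx3.hole
      · subst h2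
        rw [Ctx3.comp_hole]
        have hDen := ihC1' hrs hrok h1 p
        refine denU_mono G d ?_ hDen
        rintro C' ⟨g1, g2⟩
        refine ⟨g1, ?_⟩
        have := EvJ.cun hp g2 hC2'
        rwa [Ctx3.comp_hole] at this
      · have chainpr : ((csym G ⟨.un b' c', hc⟩ p),
            (.un (csym G ⟨r'', hrs⟩ p) (.un (csym G ⟨c', hc'⟩ p) .hole)
              : Ctx3 (NN0 G ⊕ T0) (NN1 G) T2)) ∈ P1' G d := by
          refine Or.inl ⟨.inr (.inr ⟨r'', hrs⟩), .inr (.inr ⟨c', hc'⟩), rfl, ?_⟩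
          rintro D1 ⟨g1, gE1⟩ D2 ⟨g2, gE2⟩
          exact ⟨Ctx3.comp_ne_hole g1 _, EvJ.cun hp gE1 gE2⟩
        obtain ⟨r1, hr1, hE1⟩ := ihC1' hrs hrok h1 p
        obtain ⟨r2, hr2, hE2⟩ := ihC2' hc' hok' h2 p
        refine ⟨_, chainpr, ?_⟩
        have outer := EvJ.cun hr1 hE1 (EvJ.cun hr2 hE2 EvJ.hole)
        rw [Ctx3.comp_hole] at outer
        exact outer
  | cbinL hcE hsE ihc ihs =>
    rename_i σ c' C' s'' t''
    intro hc hok hne p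
    have hc' : c'.size ≤ KK G := by simp only [Ctx3.size] at hc; omega
    have hs'' : s''.size ≤ KK G := by
      have : 1 ≤ c'.size := by cases c' <;> simp [Ctx3.size]
      simp only [Ctx3.size] at hc; omega
    have hσ : d σ = false := hok.1
    have hcok : c'.SpineOk d := hok.2
    have hcE' : EvCtx G c' C' := hcE
    have hsE' : Ev G s'' t'' := hsE
    have ihc' : ∀ (h : c'.size ≤ KK G), c'.SpineOk d → C' ≠ .hole →
        ∀ p, DenU G d (csym G ⟨c', h⟩ p) C' := ihc
    have ihs' : ∀ (h : s''.size ≤ KK G) p α C, Ctx3.SpineOk d C → C ≠ .hole →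
        C.subst (.leaf α) = t'' → DenU G d (fsym G ⟨s'', h⟩ α p) C := ihs
    have hA : Ev (G' G d) (.leaf (.inl (some (⟨s'', hs''⟩, p)))) t'' := by
      refine apart G d (some (⟨s'', hs''⟩, p)) hsE' ?_
      intro p' α' C'' a1 a2 a3
      exact ihs' hs'' p' α' C'' a1 a2 a3
    by_cases h1 : C' = Ctx3.hole
    · subst h1
      refine ⟨.binL σ .hole (.leaf (.inl (some (⟨s'', hs''⟩, p)))),
        Or.inr (Or.inl ⟨σ, ⟨s'', hs''⟩, hσ, rfl, ?_⟩), ?_⟩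
      · intro t2 hEv2
        exact ⟨by simp, EvJ.cbinL hcE' hEv2⟩
      · exact EvJ.cbinL EvJ.hole hA
    · have apr : ((asym G σ ⟨s'', hs''⟩ p),
          (.binL σ .hole (.leaf (.inl (some (⟨s'', hs''⟩, p))))
            : Ctx3 (NN0 G ⊕ T0) (NN1 G) T2)) ∈ P1' G d := by
        refine Or.inr (Or.inl ⟨σ, ⟨s'', hs''⟩, hσ, rfl, ?_⟩)
        intro t2 hEv2
        exact ⟨t2, hEv2, by simp [hσ]⟩
      have chainpr : ((csym G ⟨.binL σ c' s'', hc⟩ p),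
          (.un (asym G σ ⟨s'', hs''⟩ p) (.un (csym G ⟨c', hc'⟩ p) .hole)
            : Ctx3 (NN0 G ⊕ T0) (NN1 G) T2)) ∈ P1' G d := by
        refine Or.inl ⟨.inl (σ, ⟨s'', hs''⟩), .inr (.inr ⟨c', hc'⟩), rfl, ?_⟩
        rintro D1 ⟨t2, hEv2, hD1e⟩ D2 ⟨g2, gE2⟩
        rw [hσ] at hD1e
        subst hD1e
        refine ⟨by simp [Ctx3.comp], ?_⟩
        show EvCtx G _ (Ctx3.binL σ D2 t2)
        exact EvJ.cbinL gE2 hEv2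
      obtain ⟨r2, hr2, hE2⟩ := ihc' hc' hcok h1 p
      refine ⟨_, chainpr, ?_⟩
      have outer := EvJ.cun apr (EvJ.cbinL EvJ.hole hA)
        (EvJ.cun hr2 hE2 EvJ.hole)
      rw [Ctx3.comp_hole] at outer
      exact outer
  | cbinR hsE hcE ihs ihc =>
    rename_i σ s'' t'' c' C'
    intro hc hok hne p
    have hc' : c'.size ≤ KK G := by simp only [Ctx3.size] at hc; omega
    have hs'' : s''.size ≤ KK G := by
      have : 1 ≤ c'.size := by cases c' <;> simp [Ctx3.size]
      simp only [Ctx3.size] at hc; omega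
    have hσ : d σ = true := hok.1
    have hcok : c'.SpineOk d := hok.2
    have hcE' : EvCtx G c' C' := hcE
    have hsE' : Ev G s'' t'' := hsE
    have ihc' : ∀ (h : c'.size ≤ KK G), c'.SpineOk d → C' ≠ .hole →
        ∀ p, DenU G d (csym G ⟨c', h⟩ p) C' := ihc
    have ihs' : ∀ (h : s''.size ≤ KK G) p α C, Ctx3.SpineOk d C → C ≠ .hole →
        C.subst (.leaf α) = t'' → DenU G d (fsym G ⟨s'', h⟩ α p) C := ihs
    have hA : Ev (G' G d) (.leaf (.inl (some (⟨s'', hs''⟩, p)))) t'' := by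
      refine apart G d (some (⟨s'', hs''⟩, p)) hsE' ?_
      intro p' α' C'' a1 a2 a3
      exact ihs' hs'' p' α' C'' a1 a2 a3
    by_cases h1 : C' = Ctx3.hole
    · subst h1
      refine ⟨.binR σ (.leaf (.inl (some (⟨s'', hs''⟩, p)))) .hole,
        Or.inr (Or.inr ⟨σ, ⟨s'', hs''⟩, hσ, rfl, ?_⟩), ?_⟩
      · intro t1 hEv1
        exact ⟨by simp, EvJ.cbinR hEv1 hcE'⟩
      · exact EvJ.cbinR hA EvJ.hole
    · have apr : ((asym G σ ⟨s'', hs''⟩ p),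
          (.binR σ (.leaf (.inl (some (⟨s'', hs''⟩, p)))) .hole
            : Ctx3 (NN0 G ⊕ T0) (NN1 G) T2)) ∈ P1' G d := by
        refine Or.inr (Or.inr ⟨σ, ⟨s'', hs''⟩, hσ, rfl, ?_⟩)
        intro t1 hEv1
        exact ⟨t1, hEv1, by simp [hσ]⟩
      have chainpr : ((csym G ⟨.binR σ s'' c', hc⟩ p),
          (.un (asym G σ ⟨s'', hs''⟩ p) (.un (csym G ⟨c', hc'⟩ p) .hole)
            : Ctx3 (NN0 G ⊕ T0) (NN1 G) T2)) ∈ P1' G d := by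
        refine Or.inl ⟨.inl (σ, ⟨s'', hs''⟩), .inr (.inr ⟨c', hc'⟩), rfl, ?_⟩
        rintro D1 ⟨t1, hEv1, hD1e⟩ D2 ⟨g2, gE2⟩
        rw [hσ] at hD1e
        subst hD1e
        refine ⟨by simp [Ctx3.comp], ?_⟩
        show EvCtx G _ (Ctx3.binR σ t1 D2)
        exact EvJ.cbinR hEv1 gE2
      obtain ⟨r2, hr2, hE2⟩ := ihc' hc' hcok h1 p
      refine ⟨_, chainpr, ?_⟩
      have outer := EvJ.cun apr (EvJ.cbinR hA EvJ.hole)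
        (EvJ.cun hr2 hE2 EvJ.hole)
      rw [Ctx3.comp_hole] at outer
      exact outer

end Main

end SGN


namespace SGN

section Final

variable {N0 N1 T0 T2 : Type} [Fintype N0] [Fintype N1] [Fintype T0] [Fintype T2]
variable (G : SCFTG N0 N1 T0 T2) (d : T2 → Bool)

lemma lang_eq (hd : G.IsSpine d) : (G' G d).lang = G.lang := by
  unfold SCFTG.lang
  rw [derivFrom_eq_ev (G' G d) (G' G d).start, derivFrom_eq_ev G G.start]
  ext t
  constructor
  · intro h
    have hs := soundness G d _ h
    exact hs
  · intro h
    refine apart G d none h ?_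
    intro p α C hok hne heq
    exact completeness G d hd _ h (one_le_KK G) p α C hok hne heq

lemma normalform : (G' G d).InNormalForm := by
  constructor
  · rintro ⟨a, r⟩ hp
    rcases hp with ⟨α, he, -⟩ | ⟨α, he⟩
    · exact ⟨α, Or.inl he⟩
    · exact ⟨α, Or.inr ⟨_, he⟩⟩
  · rintro ⟨b, r⟩ hp
    rcases hp with ⟨k1, k2, he, -⟩ | ⟨σ, s2, hσ, he, -⟩ | ⟨σ, s2, hσ, he, -⟩
    · exact Or.inl ⟨(k1, b.2), (k2, b.2), he⟩
    · refine Or.inr ⟨σ, some (s2, b.2), ?_, Or.inl he⟩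
      simp [G']
      exact Option.some_ne_none _
    · refine Or.inr ⟨σ, some (s2, b.2), ?_, Or.inr he⟩
      simp [G']
      exact Option.some_ne_none _

lemma spineok : (G' G d).IsSpine d := by
  rintro ⟨b, r⟩ hp
  rcases hp with ⟨k1, k2, he, -⟩ | ⟨σ, s2, hσ, he, -⟩ | ⟨σ, s2, hσ, he, -⟩
  · have he' : r = Ctx3.un (k1, b.2) (Ctx3.un (k2, b.2) Ctx3.hole) := he
    rw [he']
    trivial
  · have he' : r = Ctx3.binL σ Ctx3.hole (.leaf (.inl (some (s2, b.2)))) := he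
    rw [he']
    exact ⟨hσ, trivial⟩
  · have he' : r = Ctx3.binR σ (.leaf (.inl (some (s2, b.2)))) Ctx3.hole := he
    rw [he']
    exact ⟨hσ, trivial⟩

/-- All nonterminals occurring in a form carry parity `q`. -/
def GoodT (q : Bool) : SForm (NN0 G) (NN1 G) T0 T2 → Prop
  | .leaf (.inl a) => ∃ x, a = some (x, q)
  | .leaf (.inr _) => True
  | .un b s => b.2 = q ∧ GoodT q s
  | .bin _ s1 s2 => GoodT q s1 ∧ GoodT q s2

def GoodC (q : Bool) : Ctx3 (NN0 G ⊕ T0) (NN1 G) T2 → Prop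
  | .hole => True
  | .un b c => b.2 = q ∧ GoodC q c
  | .binL _ c s => GoodC q c ∧ GoodT G q s
  | .binR _ s c => GoodT G q s ∧ GoodC q c

lemma goodT_subst_iff (q : Bool) : ∀ (C : Ctx3 (NN0 G ⊕ T0) (NN1 G) T2)
    (x : SForm (NN0 G) (NN1 G) T0 T2),
    GoodT G q (C.subst x) ↔ (GoodC G q C ∧ GoodT G q x) := by
  intro C
  induction C with
  | hole => intro x; simp [Ctx3.subst, GoodC]
  | un b c ih =>
    intro x
    simp only [Ctx3.subst, GoodT, GoodC, ih, and_assoc]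
  | binL σ c s ih =>
    intro x
    simp only [Ctx3.subst, GoodT, GoodC, ih]
    tauto
  | binR σ s c ih =>
    intro x
    simp only [Ctx3.subst, GoodT, GoodC, ih]
    tauto

lemma prod_goodC {b r} (hp : (b, r) ∈ P1' G d) : GoodC G b.2 r := by
  rcases hp with ⟨k1, k2, he, -⟩ | ⟨σ, s2, hσ, he, -⟩ | ⟨σ, s2, hσ, he, -⟩
  · have he' : r = Ctx3.un (k1, b.2) (Ctx3.un (k2, b.2) Ctx3.hole) := he
    rw [he']
    exact ⟨rfl, rfl, trivial⟩
  · have he' : r = Ctx3.binL σ Ctx3.hole (.leaf (.inl (some (s2, b.2)))) := he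
    rw [he']
    exact ⟨trivial, ⟨s2, rfl⟩⟩
  · have he' : r = Ctx3.binR σ (.leaf (.inl (some (s2, b.2)))) Ctx3.hole := he
    rw [he']
    exact ⟨⟨s2, rfl⟩, trivial⟩

lemma goodC_subst (q : Bool) : ∀ (r : Ctx3 (NN0 G ⊕ T0) (NN1 G) T2)
    (t : SForm (NN0 G) (NN1 G) T0 T2),
    GoodC G q r → GoodT G q t → GoodT G q (r.subst t) := by
  intro r
  induction r with
  | hole => intro t _ ht; exact ht
  | un b c ih => intro t hr ht; exact ⟨hr.1, ih t hr.2 ht⟩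
  | binL σ c s ih => intro t hr ht; exact ⟨ih t hr.1 ht, hr.2⟩
  | binR σ s c ih => intro t hr ht; exact ⟨hr.1, ih t hr.2 ht⟩

lemma step_good {q s s'} (h : (G' G d).chainOnly.Step s s')
    (hg : GoodT G q s) : GoodT G q s' := by
  cases h with
  | p0 C n r hp => exact absurd hp (by simp [SCFTG.chainOnly])
  | p1 C n r t' hp =>
    rw [goodT_subst_iff G] at hg
    obtain ⟨hC, hn, ht'⟩ := hg
    rw [goodT_subst_iff G]
    refine ⟨hC, ?_⟩
    have hp' : (n, r) ∈ P1' G d := hp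
    have hr : GoodC G q r := by
      have := prod_goodC G d hp'
      rwa [hn] at this
    exact goodC_subst G q r t' hr ht'

lemma derives_good {q s s'} (h : (G' G d).chainOnly.Derives s s')
    (hg : GoodT G q s) : GoodT G q s' := by
  induction h with
  | refl => exact hg
  | tail _ hstep ih => exact step_good G d hstep ih

lemma goodT_hasLeaf {q : Bool} : ∀ (t : SForm (NN0 G) (NN1 G) T0 T2)
    (a : NN0 G), GoodT G q t → t.hasLeaf (Sum.inl a) → ∃ x, a = some (x, q) := by
  intro t
  induction t with
  | leaf l =>
    intro a hg hl
    cases l with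
    | inl a' =>
      have hl' : Sum.inl a' = Sum.inl a := hl
      simp only [Sum.inl.injEq] at hl'
      subst hl'
      exact hg
    | inr α => exact absurd (hl : Sum.inr α = Sum.inl a) Sum.inr_ne_inl
  | un b s ih => intro a hg hl; exact ih a hg.2 hl
  | bin σ s1 s2 ih1 ih2 =>
    intro a hg hl
    rcases hl with hl | hl
    · exact ih1 a hg.1 hl
    · exact ih2 a hg.2 hl

lemma spinal_ok : ∀ a : NN0 G, ∀ t ∈ (G' G d).spinalTrees a,
    ¬ t.hasLeaf (Sum.inl a) := by
  rintro a t ⟨hnoU, u, hstep, hder⟩ hleaf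
  generalize hgen : (Tree3.leaf (Sum.inl a) : SForm (NN0 G) (NN1 G) T0 T2)
      = s0 at hstep
  have hgood : GoodT G (!par G a) u := by
    cases hstep with
    | p0 C n r hp =>
      obtain ⟨rfl, hx⟩ := Ctx3.subst_eq_leaf hgen.symm
      have hx' : n = a := by
        simp only [Tree3.leaf.injEq, Sum.inl.injEq] at hx
        exact hx
      subst hx'
      show GoodT G (!par G n) r
      rcases hp with ⟨α, he, -⟩ | ⟨α, he⟩
      · have he' : r = Tree3.leaf (Sum.inr α) := he
        rw [he']
        trivial
      · have he' : r = Tree3.un (fsym G (src G n) α (!par G n))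
            (Tree3.leaf (Sum.inr α)) := he
        rw [he']
        exact ⟨rfl, trivial⟩
    | p1 C n r t' hp =>
      obtain ⟨-, hx⟩ := Ctx3.subst_eq_leaf hgen.symm
      cases hx
  have hgt : GoodT G (!par G a) t := derives_good G d hder hgood
  obtain ⟨x, hx⟩ := goodT_hasLeaf G t a hgt hleaf
  cases a with
  | none => exact absurd hx (by simp)
  | some y =>
    obtain ⟨z, q⟩ := y
    have hq : q = !q := by
      have h2 := hx
      injection h2 with h3
      exact congrArg Prod.snd h3
    simp at hq

end Final

end SGN

/-- For every spine grammar there exists a strongly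
equivalent normalized spine grammar. -/
theorem spine_grammar_normalization (N0 N1 T0 T2 : Type)
    [Fintype N0] [Fintype N1] [Fintype T0] [Fintype T2]
    (G : SCFTG N0 N1 T0 T2) (d : T2 → Bool) (hd : G.IsSpine d) :
    ∃ (N0' N1' : Type) (_ : Fintype N0') (_ : Fintype N1')
      (G' : SCFTG N0' N1' T0 T2) (d' : T2 → Bool),
      G'.IsSpine d' ∧ G'.Normalized ∧ G'.lang = G.lang := by
  exact ⟨SGN.NN0 G, SGN.NN1 G, inferInstance, inferInstance, SGN.G' G d, d,
    SGN.spineok G d, ⟨SGN.normalform G d, SGN.spinal_ok G d⟩,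
    SGN.lang_eq G d hd⟩
end

section
/- For every simple monadic context-free tree grammar G there exist a spine grammar G' and a relabeling ρ of ranked symbols such that T(G) = { ρ(t) | t ∈ T(G') }. -/
-- auxiliary development, to be inserted before the theorem

namespace SpineAux

open Tree3

/-- Relabel only binary symbols in a tree. -/
def tmap {L U B B' : Type} (f : B → B') : Tree3 L U B → Tree3 L U B' :=
  Tree3.map id id f

/-- Relabel only binary symbols in a context. -/
def cmap {L U B B' : Type} (f : B → B') : Ctx3 L U B → Ctx3 L U B'
  | .hole => .hole
  | .un u c => .un u (cmap f c)
  | .binL b c t => .binL (f b) (cmap f c) (tmap f t)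
  | .binR b t c => .binR (f b) (tmap f t) (cmap f c)

@[simp] lemma tmap_leaf {L U B B' : Type} (f : B → B') (a : L) :
    tmap (U := U) f (.leaf a) = .leaf a := rfl

@[simp] lemma tmap_un {L U B B' : Type} (f : B → B') (u : U) (t : Tree3 L U B) :
    tmap f (.un u t) = .un u (tmap f t) := rfl

@[simp] lemma tmap_bin {L U B B' : Type} (f : B → B') (b : B) (t₁ t₂ : Tree3 L U B) :
    tmap f (.bin b t₁ t₂) = .bin (f b) (tmap f t₁) (tmap f t₂) := rfl

lemma tmap_tmap {L U B B' B'' : Type} (f : B → B') (g : B' → B'') (t : Tree3 L U B) :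
    tmap g (tmap f t) = tmap (g ∘ f) t := by
  induction t with
  | leaf a => rfl
  | un u t ih => simp [ih]
  | bin b t₁ t₂ ih₁ ih₂ => simp [ih₁, ih₂]

lemma tmap_id {L U B : Type} (t : Tree3 L U B) : tmap id t = t := by
  induction t with
  | leaf a => rfl
  | un u t ih => simp [ih]
  | bin b t₁ t₂ ih₁ ih₂ => simp [ih₁, ih₂]

lemma tmap_subst {L U B B' : Type} (f : B → B') (C : Ctx3 L U B) (t : Tree3 L U B) :
    tmap f (C.subst t) = (cmap f C).subst (tmap f t) := by
  induction C with
  | hole => rfl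
  | un u c ih => simp [Ctx3.subst, cmap, ih]
  | binL b c s ih => simp [Ctx3.subst, cmap, ih]
  | binR b s c ih => simp [Ctx3.subst, cmap, ih]

/-- Decomposition lemma: a context decomposition of `tmap f s` lifts to `s`. -/
lemma decomp {L U B B' : Type} (f : B → B') :
    ∀ (C : Ctx3 L U B') (s : Tree3 L U B) (u : Tree3 L U B'),
      tmap f s = C.subst u →
      ∃ (C' : Ctx3 L U B) (u' : Tree3 L U B),
        s = C'.subst u' ∧ cmap f C' = C ∧ tmap f u' = u := by
  intro C
  induction C with
  | hole =>
    intro s u h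
    exact ⟨.hole, s, rfl, rfl, h⟩
  | un v c ih =>
    intro s u h
    cases s with
    | leaf a => simp [Ctx3.subst] at h
    | bin b t₁ t₂ => simp [Ctx3.subst] at h
    | un w t =>
      simp only [tmap_un, Ctx3.subst] at h
      obtain ⟨rfl, h2⟩ := Tree3.un.inj h
      obtain ⟨C', u', rfl, rfl, rfl⟩ := ih t u h2
      exact ⟨.un w C', u', rfl, rfl, rfl⟩
  | binL b c t ihc =>
    intro s u h
    cases s with
    | leaf a => simp [Ctx3.subst] at h
    | un w t' => simp [Ctx3.subst] at h
    | bin b' t₁ t₂ =>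
      simp only [tmap_bin, Ctx3.subst] at h
      obtain ⟨hb, h1, h2⟩ := Tree3.bin.inj h
      obtain ⟨C', u', rfl, rfl, rfl⟩ := ihc t₁ u h1
      exact ⟨.binL b' C' t₂, u', rfl, by simp [cmap, hb, h2], rfl⟩
  | binR b t c ihc =>
    intro s u h
    cases s with
    | leaf a => simp [Ctx3.subst] at h
    | un w t' => simp [Ctx3.subst] at h
    | bin b' t₁ t₂ =>
      simp only [tmap_bin, Ctx3.subst] at h
      obtain ⟨hb, h1, h2⟩ := Tree3.bin.inj h
      obtain ⟨C', u', rfl, rfl, rfl⟩ := ihc t₂ u h2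
      exact ⟨.binR b' t₁ C', u', rfl, by simp [cmap, hb, h1], rfl⟩

section Grammar

variable {N0 N1 T0 T2 T2' : Type}

/-- Projecting a derivation step of `G'` to `G`. -/
lemma step_map (f : T2' → T2)
    (G' : SCFTG N0 N1 T0 T2') (G : SCFTG N0 N1 T0 T2)
    (h0 : ∀ p ∈ G'.P0, (p.1, tmap f p.2) ∈ G.P0)
    (h1 : ∀ p ∈ G'.P1, (p.1, cmap f p.2) ∈ G.P1)
    {s t : SForm N0 N1 T0 T2'} (h : G'.Step s t) :
    G.Step (tmap f s) (tmap f t) := by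
  cases h with
  | p0 C n r hp =>
    rw [tmap_subst, tmap_subst, tmap_leaf]
    exact SCFTG.Step.p0 (cmap f C) n (tmap f r) (h0 _ hp)
  | p1 C n r t' hp =>
    rw [tmap_subst, tmap_subst, tmap_un, tmap_subst]
    exact SCFTG.Step.p1 (cmap f C) n (cmap f r) (tmap f t') (h1 _ hp)

/-- Lifting a derivation step of `G` along `f` to `G'`. -/
lemma step_lift (f : T2' → T2)
    (G' : SCFTG N0 N1 T0 T2') (G : SCFTG N0 N1 T0 T2)
    (h0 : ∀ p ∈ G.P0, ∃ r', (p.1, r') ∈ G'.P0 ∧ tmap f r' = p.2)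
    (h1 : ∀ p ∈ G.P1, ∃ r', (p.1, r') ∈ G'.P1 ∧ cmap f r' = p.2)
    {s' : SForm N0 N1 T0 T2'} {t : SForm N0 N1 T0 T2}
    (h : G.Step (tmap f s') t) :
    ∃ t', G'.Step s' t' ∧ tmap f t' = t := by
  generalize heq : tmap f s' = s0 at h
  cases h with
  | p0 C n r hp =>
    obtain ⟨C', u', rfl, rfl, hu⟩ := decomp f C s' _ heq
    obtain ⟨r', hr'mem, hr'⟩ := h0 (n, r) hp
    cases u' with
    | leaf a =>
      simp only [tmap_leaf] at hu
      obtain rfl := Tree3.leaf.inj hu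
      refine ⟨C'.subst r', SCFTG.Step.p0 C' n r' hr'mem, ?_⟩
      rw [tmap_subst, hr']
    | un w t' => simp at hu
    | bin b t₁ t₂ => simp at hu
  | p1 C n r t₀ hp =>
    obtain ⟨C', u', rfl, rfl, hu⟩ := decomp f C s' _ heq
    obtain ⟨r', hr'mem, hr'⟩ := h1 (n, r) hp
    cases u' with
    | leaf a => simp at hu
    | bin b t₁ t₂ => simp at hu
    | un w t₀' =>
      simp only [tmap_un] at hu
      obtain ⟨rfl, ht₀⟩ := Tree3.un.inj hu
      refine ⟨C'.subst (r'.subst t₀'), SCFTG.Step.p1 C' w r' t₀' hr'mem, ?_⟩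
      rw [tmap_subst, tmap_subst, hr', ht₀]

/-- Lifting derivations. -/
lemma derives_lift (f : T2' → T2)
    (G' : SCFTG N0 N1 T0 T2') (G : SCFTG N0 N1 T0 T2)
    (h0 : ∀ p ∈ G.P0, ∃ r', (p.1, r') ∈ G'.P0 ∧ tmap f r' = p.2)
    (h1 : ∀ p ∈ G.P1, ∃ r', (p.1, r') ∈ G'.P1 ∧ cmap f r' = p.2)
    {a' : SForm N0 N1 T0 T2'} {b : SForm N0 N1 T0 T2}
    (h : G.Derives (tmap f a') b) :
    ∃ b', G'.Derives a' b' ∧ tmap f b' = b := by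
  induction h with
  | refl => exact ⟨a', Relation.ReflTransGen.refl, rfl⟩
  | tail _ hstep ih =>
    obtain ⟨c', hder, rfl⟩ := ih
    obtain ⟨b', hstep', hb⟩ := step_lift f G' G h0 h1 hstep
    exact ⟨b', hder.tail hstep', hb⟩

lemma derives_map (f : T2' → T2)
    (G' : SCFTG N0 N1 T0 T2') (G : SCFTG N0 N1 T0 T2)
    (h0 : ∀ p ∈ G'.P0, (p.1, tmap f p.2) ∈ G.P0)
    (h1 : ∀ p ∈ G'.P1, (p.1, cmap f p.2) ∈ G.P1)
    {a b : SForm N0 N1 T0 T2'} (h : G'.Derives a b) :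
    G.Derives (tmap f a) (tmap f b) := by
  induction h with
  | refl => exact Relation.ReflTransGen.refl
  | tail _ hstep ih => exact ih.tail (step_map f G' G h0 h1 hstep)

/-- `tmap` commutes with `embed`. -/
lemma tmap_embed (f : T2' → T2) (u : Tree3 T0 Empty T2') :
    tmap f (SCFTG.embed (N0 := N0) (N1 := N1) u)
      = SCFTG.embed (Tree3.map id id f u) := by
  induction u with
  | leaf a => rfl
  | un e t ih => exact e.elim
  | bin b t₁ t₂ ih₁ ih₂ =>
    simp only [SCFTG.embed, Tree3.map, tmap_bin] at *
    exact congrArg₂ _ ih₁ ih₂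

/-- Preimages of embedded trees are embedded trees. -/
lemma embed_lift (f : T2' → T2) (s' : SForm N0 N1 T0 T2') :
    ∀ (t : Tree3 T0 Empty T2), tmap f s' = SCFTG.embed t →
      ∃ t', s' = SCFTG.embed t' ∧ Tree3.map id id f t' = t := by
  induction s' with
  | leaf a =>
    intro t h
    cases t with
    | leaf α =>
      simp only [tmap_leaf, SCFTG.embed, Tree3.map] at h
      obtain rfl := Tree3.leaf.inj h
      exact ⟨.leaf α, rfl, rfl⟩
    | un e _ => exact e.elim
    | bin σ t₁ t₂ => simp [SCFTG.embed, Tree3.map] at h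
  | un w s ih =>
    intro t h
    cases t with
    | leaf α => simp [SCFTG.embed, Tree3.map] at h
    | un e _ => exact e.elim
    | bin σ t₁ t₂ => simp [SCFTG.embed, Tree3.map] at h
  | bin b s₁ s₂ ih₁ ih₂ =>
    intro t h
    cases t with
    | leaf α => simp [SCFTG.embed, Tree3.map] at h
    | un e _ => exact e.elim
    | bin σ t₁ t₂ =>
      simp only [tmap_bin, SCFTG.embed, Tree3.map] at h
      obtain ⟨hb, h1, h2⟩ := Tree3.bin.inj h
      obtain ⟨t₁', rfl, rfl⟩ := ih₁ t₁ h1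
      obtain ⟨t₂', rfl, rfl⟩ := ih₂ t₂ h2
      exact ⟨.bin b t₁' t₂', rfl, by simp [Tree3.map, hb]⟩

end Grammar

/-- Canonical lift of a context, recording the spine direction. -/
def liftC {L U B : Type} : Ctx3 L U B → Ctx3 L U (B × Bool)
  | .hole => .hole
  | .un u c => .un u (liftC c)
  | .binL b c t => .binL (b, false) (liftC c) (tmap (fun x => (x, false)) t)
  | .binR b t c => .binR (b, true) (tmap (fun x => (x, false)) t) (liftC c)

lemma tmap_fst_lift {L U B : Type} (t : Tree3 L U B) :
    tmap Prod.fst (tmap (fun x => (x, false)) t) = t := by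
  rw [tmap_tmap]; exact tmap_id t

lemma cmap_liftC {L U B : Type} (C : Ctx3 L U B) :
    cmap Prod.fst (liftC C) = C := by
  induction C with
  | hole => rfl
  | un u c ih => simp [liftC, cmap, ih]
  | binL b c t ih => simp [liftC, cmap, ih, tmap_fst_lift]
  | binR b t c ih => simp [liftC, cmap, ih, tmap_fst_lift]

lemma liftC_spineOk {L U B : Type} (C : Ctx3 L U B) :
    Ctx3.SpineOk (fun b => b.2) (liftC C) := by
  induction C with
  | hole => trivial
  | un u c ih => exact ih
  | binL b c t ih => exact ⟨rfl, ih⟩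
  | binR b t c ih => exact ⟨rfl, ih⟩

end SpineAux


/-- For every sCFTG `G` there exist a spine grammar `G'` and
a relabeling `ρ` such that `T(G) = { ρ(t) | t ∈ T(G') }`. -/
theorem scftg_to_spine_grammar (N0 N1 T0 T2 : Type)
    [Fintype N0] [Fintype N1] [Fintype T0] [Fintype T2]
    (G : SCFTG N0 N1 T0 T2) :
    ∃ (N0' N1' T0' T2' : Type) (_ : Fintype N0') (_ : Fintype N1')
      (_ : Fintype T0') (_ : Fintype T2')
      (G' : SCFTG N0' N1' T0' T2') (d' : T2' → Bool)
      (ρ0 : T0' → T0) (ρ2 : T2' → T2),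
      G'.IsSpine d' ∧ G.lang = Tree3.map ρ0 id ρ2 '' G'.lang := by
  classical
  open SpineAux in
  refine ⟨N0, N1, T0, T2 × Bool, inferInstance, inferInstance, inferInstance,
    inferInstance,
    ⟨G.start, (fun p => (p.1, tmap (fun x => (x, false)) p.2)) '' G.P0,
      (fun p => (p.1, liftC p.2)) '' G.P1,
      G.P0_fin.image _, G.P1_fin.image _⟩,
    (fun b => b.2), id, Prod.fst, ?_, ?_⟩
  · -- spine property
    rintro p ⟨q, hq, rfl⟩
    exact liftC_spineOk q.2
  · -- language equality
    set G' : SCFTG N0 N1 T0 (T2 × Bool) :=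
      ⟨G.start, (fun p => (p.1, tmap (fun x => (x, false)) p.2)) '' G.P0,
        (fun p => (p.1, liftC p.2)) '' G.P1,
        G.P0_fin.image _, G.P1_fin.image _⟩ with hG'
    have h0lift : ∀ p ∈ G.P0, ∃ r', (p.1, r') ∈ G'.P0 ∧
        tmap Prod.fst r' = p.2 := by
      intro p hp
      exact ⟨tmap (fun x => (x, false)) p.2, ⟨p, hp, rfl⟩, tmap_fst_lift p.2⟩
    have h1lift : ∀ p ∈ G.P1, ∃ r', (p.1, r') ∈ G'.P1 ∧
        cmap Prod.fst r' = p.2 := by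
      intro p hp
      exact ⟨liftC p.2, ⟨p, hp, rfl⟩, cmap_liftC p.2⟩
    have h0map : ∀ p ∈ G'.P0, (p.1, tmap Prod.fst p.2) ∈ G.P0 := by
      rintro p ⟨q, hq, rfl⟩
      simpa [tmap_fst_lift] using hq
    have h1map : ∀ p ∈ G'.P1, (p.1, cmap Prod.fst p.2) ∈ G.P1 := by
      rintro p ⟨q, hq, rfl⟩
      simpa [cmap_liftC] using hq
    ext t
    simp only [SCFTG.lang, SCFTG.derivFrom, Set.mem_setOf_eq, Set.mem_image]
    constructor
    · intro ht
      have ht' : G.Derives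
          (tmap Prod.fst (.leaf (.inl G.start) : SForm N0 N1 T0 (T2 × Bool)))
          (SCFTG.embed t) := ht
      obtain ⟨b', hder, hb⟩ := derives_lift Prod.fst G' G h0lift h1lift ht'
      obtain ⟨t', rfl, rfl⟩ := embed_lift Prod.fst b' t hb
      exact ⟨t', hder, rfl⟩
    · rintro ⟨t', ht', rfl⟩
      have := derives_map Prod.fst G' G h0map h1map ht'
      simpa [tmap_embed] using this
end
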